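/- arXiv:0910.4197 — 3 statements merged into one kernel-verified Lean document; each statement's English description precedes it below -/
import Mathlib

section
/- Let H=(V,E) be a balanced hypergraph. Then ⋎_V(H) = ⋎_V(H∖v) for every v ∈ D_H. -/
open Finset

/-- A hypergraph: a finite vertex set `V` and a finite collection `E` of nonempty
subsets of `V` whose union is `V`. -/
structure FinHypergraph (α : Type*) [DecidableEq α] where
  V : Finset α
  E : Finset (Finset α)
  edge_nonempty : ∀ e ∈ E, e.Nonempty
  edge_subset : ∀ e ∈ E, e ⊆ V
  vertex_mem : ∀ v ∈ V, ∃ e ∈ E, v ∈ e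

namespace FinHypergraph

variable {α : Type*} [DecidableEq α]

/-- A cycle of length `l`: a sequence `v 0, e 1, v 1, e 2, …, e l, v l` with
`v (i-1), v i ∈ e i`, the vertices `v 0, …, v (l-1)` pairwise distinct and `v l = v 0`. -/
def IsCycle (H : FinHypergraph α) (l : ℕ) (v : ℕ → α) (e : ℕ → Finset α) : Prop :=
  2 ≤ l ∧ (∀ i, 1 ≤ i → i ≤ l → e i ∈ H.E ∧ v (i - 1) ∈ e i ∧ v i ∈ e i) ∧
    (∀ i j, i < l → j < l → v i = v j → i = j) ∧ v l = v 0

/-- A strong cycle: no edge of the cycle contains three vertices of the cycle. -/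
def IsStrongCycle (H : FinHypergraph α) (l : ℕ) (v : ℕ → α) (e : ℕ → Finset α) : Prop :=
  H.IsCycle l v e ∧ ∀ i, 1 ≤ i → i ≤ l → (e i ∩ (Finset.range l).image v).card ≤ 2

/-- A hypergraph is balanced if it has no strong cycle of odd length. -/
def Balanced (H : FinHypergraph α) : Prop :=
  ¬ ∃ (l : ℕ) (v : ℕ → α) (e : ℕ → Finset α), H.IsStrongCycle l v e ∧ Odd l

/-- A matching: a set of pairwise disjoint edges. -/
def IsMatching (H : FinHypergraph α) (M : Finset (Finset α)) : Prop :=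
  M ⊆ H.E ∧ ∀ e ∈ M, ∀ f ∈ M, e ≠ f → Disjoint e f

/-- The `d`-matching number `⋎_d(H)`: the maximum of `∑ m ∈ M, d m` over matchings `M`. -/
noncomputable def nuW (H : FinHypergraph α) (d : Finset α → ℕ) : ℕ :=
  sSup ((fun M => ∑ m ∈ M, d m) '' {M | H.IsMatching M})

/-- The matching number `⋎_E(H)`: the maximum number of edges of a matching. -/
noncomputable def nuE (H : FinHypergraph α) : ℕ :=
  sSup ((fun M : Finset (Finset α) => M.card) '' {M | H.IsMatching M})

/-- The matching number `⋎_V(H)`: the maximum number of vertices covered by a matching. -/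
noncomputable def nuV (H : FinHypergraph α) : ℕ :=
  sSup ((fun M : Finset (Finset α) => ∑ m ∈ M, m.card) '' {M | H.IsMatching M})

/-- A `d`-vertex cover: `x : α → ℕ` with `∑_{u ∈ e} x u ≥ d e` for every edge `e`. -/
def IsCover (H : FinHypergraph α) (d : Finset α → ℕ) (x : α → ℕ) : Prop :=
  ∀ e ∈ H.E, d e ≤ ∑ u ∈ e, x u

/-- The `d`-vertex cover number `τ_d(H)`. -/
noncomputable def tauW (H : FinHypergraph α) (d : Finset α → ℕ) : ℕ :=
  sInf ((fun x : α → ℕ => ∑ u ∈ H.V, x u) '' {x | H.IsCover d x})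

/-- An `E`-vertex cover: every edge gets total weight at least `1`. -/
def IsECover (H : FinHypergraph α) (x : α → ℕ) : Prop :=
  H.IsCover (fun _ => 1) x

/-- A `V`-vertex cover: every edge `e` gets total weight at least `|e|`. -/
def IsVCover (H : FinHypergraph α) (x : α → ℕ) : Prop :=
  H.IsCover (fun e => e.card) x

/-- The `E`-vertex cover number `τ_E(H)`. -/
noncomputable def tauE (H : FinHypergraph α) : ℕ := H.tauW (fun _ => 1)

/-- The `V`-vertex cover number `τ_V(H)`. -/
noncomputable def tauV (H : FinHypergraph α) : ℕ := H.tauW (fun e => e.card)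

/-- A `V`-maximum matching: maximizes the number of covered vertices. -/
def IsMaxVMatching (H : FinHypergraph α) (M : Finset (Finset α)) : Prop :=
  H.IsMatching M ∧ ∀ M', H.IsMatching M' → ∑ m ∈ M', m.card ≤ ∑ m ∈ M, m.card

/-- An `E`-maximum matching: maximizes the number of edges. -/
def IsMaxEMatching (H : FinHypergraph α) (M : Finset (Finset α)) : Prop :=
  H.IsMatching M ∧ ∀ M', H.IsMatching M' → M'.card ≤ M.card

/-- A minimum `V`-vertex cover. -/
def IsMinVCover (H : FinHypergraph α) (x : α → ℕ) : Prop :=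
  H.IsVCover x ∧ ∀ y, H.IsVCover y → ∑ u ∈ H.V, x u ≤ ∑ u ∈ H.V, y u

/-- A minimum `E`-vertex cover. -/
def IsMinECover (H : FinHypergraph α) (x : α → ℕ) : Prop :=
  H.IsECover x ∧ ∀ y, H.IsECover y → ∑ u ∈ H.V, x u ≤ ∑ u ∈ H.V, y u

/-- The hypergraph `H ∖ v = (V ∖ {v}, {e ∖ {v} : e ∈ E, e ∖ {v} ≠ ∅})`. -/
def delV (H : FinHypergraph α) (v : α) : FinHypergraph α where
  V := H.V.erase v
  E := (H.E.image fun e => e.erase v).filter fun e => e.Nonempty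
  edge_nonempty := fun e he => (Finset.mem_filter.mp he).2
  edge_subset := by
    intro e he
    obtain ⟨f, hf, rfl⟩ := Finset.mem_image.mp (Finset.mem_filter.mp he).1
    exact Finset.erase_subset_erase v (H.edge_subset f hf)
  vertex_mem := by
    intro u hu
    obtain ⟨hne, huV⟩ := Finset.mem_erase.mp hu
    obtain ⟨e, he, hue⟩ := H.vertex_mem u huV
    exact ⟨e.erase v,
      Finset.mem_filter.mpr ⟨Finset.mem_image_of_mem _ he,
        ⟨u, Finset.mem_erase.mpr ⟨hne, hue⟩⟩⟩,
      Finset.mem_erase.mpr ⟨hne, hue⟩⟩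

/-- `D_H`: vertices not covered by at least one `V`-maximum matching. -/
def setD (H : FinHypergraph α) : Set α :=
  {v | v ∈ H.V ∧ ∃ M, H.IsMaxVMatching M ∧ ∀ m ∈ M, v ∉ m}

/-- `P_H`: vertices having weight at least `2` in every minimum `V`-vertex cover. -/
def setP (H : FinHypergraph α) : Set α :=
  {v | v ∈ H.V ∧ ∀ x, H.IsMinVCover x → 2 ≤ x v}

/-- `M_H = V ∖ (D_H ∪ P_H)`. -/
def setM (H : FinHypergraph α) : Set α :=
  {v | v ∈ H.V ∧ v ∉ H.setD ∧ v ∉ H.setP}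

/-- `A_H`: vertices outside `D_H` lying in a common edge with some vertex of `D_H`. -/
def setA (H : FinHypergraph α) : Set α :=
  {v | v ∈ H.V ∧ v ∉ H.setD ∧ ∃ e ∈ H.E, v ∈ e ∧ ∃ u ∈ H.setD, u ∈ e}

/-- `C_H = V ∖ (A_H ∪ D_H)`. -/
def setC (H : FinHypergraph α) : Set α :=
  {v | v ∈ H.V ∧ v ∉ H.setA ∧ v ∉ H.setD}

/-- `F_H`: vertices not covered by at least one `E`-maximum matching. -/
def setF (H : FinHypergraph α) : Set α :=
  {v | v ∈ H.V ∧ ∃ M, H.IsMaxEMatching M ∧ ∀ m ∈ M, v ∉ m}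

/-- `Q_H`: vertices having weight exactly `1` in every minimum `E`-vertex cover. -/
def setQ (H : FinHypergraph α) : Set α :=
  {v | v ∈ H.V ∧ ∀ x, H.IsMinECover x → x v = 1}

/-- `N_H = V ∖ (Q_H ∪ F_H)`. -/
def setN (H : FinHypergraph α) : Set α :=
  {v | v ∈ H.V ∧ v ∉ H.setQ ∧ v ∉ H.setF}

/-- Degree of a vertex. -/
def degree (H : FinHypergraph α) (v : α) : ℕ := (H.E.filter fun e => v ∈ e).card

/-- Maximum degree `Δ(H)`. -/
def maxDegree (H : FinHypergraph α) : ℕ := H.V.sup H.degree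

/-- Factor critical: `H ∖ v` has a perfect matching for every vertex `v`. -/
def FactorCritical (H : FinHypergraph α) : Prop :=
  ∀ v ∈ H.V, ∃ M, (H.delV v).IsMatching M ∧ ∀ u ∈ (H.delV v).V, ∃ m ∈ M, u ∈ m

/-- A stable set: no subset of size at least two is contained in an edge. -/
def IsStable (H : FinHypergraph α) (S : Finset α) : Prop :=
  S ⊆ H.V ∧ ∀ T ⊆ S, 2 ≤ T.card → ∀ e ∈ H.E, ¬ T ⊆ e

/-- A maximum weight stable set with regard to the weight function `d`. -/
def IsMaxWeightStable (H : FinHypergraph α) (d : α → ℕ) (S : Finset α) : Prop :=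
  H.IsStable S ∧ ∀ T, H.IsStable T → ∑ u ∈ T, d u ≤ ∑ u ∈ S, d u

/-- `K` is the subhypergraph of `H` induced by some vertex set `W`. -/
def IsSubhypergraph (H K : FinHypergraph α) : Prop :=
  ∃ W : Finset α, W ⊆ H.V ∧ K.V = W ∧
    K.E = (H.E.image fun e => e ∩ W).filter fun e => e.Nonempty

/-- `K` is a partial hypergraph of `H`: generated by a subset of the edges of `H`. -/
def IsPartialHypergraph (H K : FinHypergraph α) : Prop := K.E ⊆ H.E

/-- `K` is a partial subhypergraph of `H`: a partial hypergraph of a subhypergraph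
of `H`, or a subhypergraph of a partial hypergraph of `H`. -/
def IsPartialSubhypergraph (H K : FinHypergraph α) : Prop :=
  (∃ G : FinHypergraph α, H.IsSubhypergraph G ∧ G.IsPartialHypergraph K) ∨
  (∃ G : FinHypergraph α, H.IsPartialHypergraph G ∧ G.IsSubhypergraph K)

end FinHypergraph

/-!
Let `M` be a `V`-maximum matching of `H` missing `v`. A matching of `H ∖ v` lifts to a family `L`
of edges of `H` pairwise meeting at most in `v`, so it suffices to show
`∑ e ∈ L, #e ≤ ∑ m ∈ M, #m`. Call two members of `M ∪ L` adjacent when they meet outside `v`.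
On a connected class, trading the edges of `M` for those of `L` gives a matching of `H` unless
the class contains two edges of `L` through `v`. But a shortest chain between two such edges
alternates between `L` and `M`, so it has even length, and it closes up through `v` to a strong
cycle of odd length, which balancedness forbids. Maximality of `M` now bounds `L` on every
class, and summing over the classes proves the claim.
-/

theorem Finset.sum_le_sum_of_forall_classes {ι M : Type*} [AddCommMonoid M] [PartialOrder M]
    [IsOrderedAddMonoid M] [DecidableEq ι] {r : ι → ι → Prop} [DecidableRel r] (hr : Equivalence r)
    {s t : Finset ι} {f : ι → M}
    (h : ∀ i ∈ s ∪ t, ∑ j ∈ s with r i j, f j ≤ ∑ j ∈ t with r i j, f j) :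
    ∑ i ∈ s, f i ≤ ∑ i ∈ t, f i := by
  classical
  let q : ι → Quotient (⟨r, hr⟩ : Setoid ι) := Quotient.mk _
  have hq : ∀ i j, q j = q i ↔ r i j := fun i j => Quotient.eq.trans ⟨hr.symm, hr.symm⟩
  rw [← Finset.sum_fiberwise_of_maps_to (g := q) (t := (s ∪ t).image q)
      (fun i hi => Finset.mem_image_of_mem q (Finset.mem_union_left t hi)),
    ← Finset.sum_fiberwise_of_maps_to (g := q) (t := (s ∪ t).image q)
      (fun i hi => Finset.mem_image_of_mem q (Finset.mem_union_right s hi))]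
  refine Finset.sum_le_sum fun c hc => ?_
  obtain ⟨i, hi, rfl⟩ := Finset.mem_image.mp hc
  simpa only [hq] using h i hi

theorem Finset.disjoint_of_inter_subset_singleton {α : Type*} [DecidableEq α] {a b : Finset α}
    {v : α} (h : a ∩ b ⊆ {v}) (hv : v ∉ a) : Disjoint a b :=
  Finset.disjoint_left.mpr fun _ hxa hxb =>
    hv (Finset.mem_singleton.mp (h (Finset.mem_inter.mpr ⟨hxa, hxb⟩)) ▸ hxa)

namespace Relation

variable {β : Type*} {r : β → β → Prop} {a b : β}

theorem ReflTransGen.exists_seq (h : ReflTransGen r a b) :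
    ∃ (n : ℕ) (p : ℕ → β), p 0 = a ∧ p n = b ∧ ∀ i < n, r (p i) (p (i + 1)) := by
  induction h with
  | refl => exact ⟨0, fun _ => a, rfl, rfl, fun i hi => absurd hi i.not_lt_zero⟩
  | @tail c d _ hcd ih =>
    obtain ⟨n, p, hp0, hpn, hp⟩ := ih
    refine ⟨n + 1, fun i => if i ≤ n then p i else d, by simpa, by simp, fun i hi => ?_⟩
    rcases Nat.lt_or_ge i n with hin | hin
    · simpa [hin.le, Nat.succ_le_of_lt hin] using hp i hin
    · obtain rfl : i = n := by omega
      simpa [hpn] using hcd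

structure IsChordlessChain (r : β → β → Prop) (T : β → Prop) (n : ℕ) (p : ℕ → β) : Prop where
  rel : ∀ i < n, r (p i) (p (i + 1))
  first : T (p 0)
  last : T (p n)
  first_ne_last : p 0 ≠ p n
  no_shortcut : ∀ a b, a + 2 ≤ b → b ≤ n → ¬ r (p a) (p b)
  not_inner : ∀ i, 0 < i → i < n → ¬ T (p i)

theorem exists_shorter_seq_of_shortcut {n a b : ℕ} {p : ℕ → β} (hp : ∀ i < n, r (p i) (p (i + 1)))
    (hab : a < b) (hbn : b ≤ n) (hr : r (p a) (p b)) :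
    ∃ q : ℕ → β, q 0 = p 0 ∧ q (n - (b - a - 1)) = p n ∧
      ∀ i < n - (b - a - 1), r (q i) (q (i + 1)) := by
  refine ⟨fun i => if i ≤ a then p i else p (i + (b - a - 1)), by simp, ?_, fun i hi => ?_⟩
  · have h : ¬ n - (b - a - 1) ≤ a := by omega
    simp only [h, if_false]
    congr 1
    omega
  · rcases Nat.lt_trichotomy i a with hia | rfl | hia
    · simpa [hia.le, Nat.succ_le_of_lt hia] using hp i (by omega)
    · have h : i + 1 + (b - i - 1) = b := by omega
      simpa [h] using hr
    · have h : i + 1 + (b - a - 1) = i + (b - a - 1) + 1 := by omega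
      simpa [show ¬ i ≤ a by omega, show ¬ i + 1 ≤ a by omega, h] using
        hp (i + (b - a - 1)) (by omega)

theorem exists_isChordlessChain {T : β → Prop} {n : ℕ} {p : ℕ → β}
    (hp : ∀ i < n, r (p i) (p (i + 1))) (h0 : T (p 0)) (hn : T (p n)) (hne : p 0 ≠ p n) :
    ∃ m q, IsChordlessChain r T m q := by
  classical
  have hex : ∃ n, ∃ p : ℕ → β, (∀ i < n, r (p i) (p (i + 1))) ∧ T (p 0) ∧ T (p n) ∧ p 0 ≠ p n :=
    ⟨n, p, hp, h0, hn, hne⟩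
  obtain ⟨p, hp, h0, hn, hne⟩ := Nat.find_spec hex
  have hmin := fun m (hm : m < Nat.find hex) => Nat.find_min hex hm
  refine ⟨_, p, hp, h0, hn, hne, fun a b hab hb hr => ?_, fun i hi0 hin hi => ?_⟩
  · obtain ⟨q, hq0, hqn, hq⟩ := exists_shorter_seq_of_shortcut hp (by omega) hb hr
    exact hmin _ (by omega) ⟨q, hq, hq0 ▸ h0, hqn ▸ hn, hq0 ▸ hqn ▸ hne⟩
  · by_cases hi0' : p i = p 0
    · refine hmin (Nat.find hex - i) (by omega) ⟨fun j => p (j + i), fun j hj => ?_, ?_, ?_, ?_⟩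
      · simpa [Nat.add_right_comm j 1 i] using hp (j + i) (by omega)
      · simpa using hi
      · simpa [Nat.sub_add_cancel hin.le] using hn
      · simpa [Nat.sub_add_cancel hin.le, hi0'] using hne
    · exact hmin i hin ⟨p, fun j hj => hp j (by omega), h0, hi, Ne.symm hi0'⟩

theorem IsChordlessChain.ne_succ {T : β → Prop} {n : ℕ} {p : ℕ → β}
    (hp : IsChordlessChain r T n p) {i : ℕ} (hi : i < n) : p i ≠ p (i + 1) := by
  intro h
  by_cases hin : i + 1 < n
  · exact hp.no_shortcut i (i + 2) le_rfl hin (h ▸ hp.rel (i + 1) hin)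
  · obtain rfl : n = i + 1 := by omega
    rcases Nat.eq_zero_or_pos i with rfl | hi0
    · exact hp.first_ne_last h
    · exact hp.not_inner i hi0 hi (h ▸ hp.last)

end Relation

namespace FinHypergraph

open Finset Relation

section CycleVertex

variable {α : Type*} {v : α} {n : ℕ} {x : ℕ → α}

def cycleVertex (v : α) (n : ℕ) (x : ℕ → α) (i : ℕ) : α :=
  if 0 < i ∧ i ≤ n then x (i - 1) else v

@[simp] theorem cycleVertex_zero : cycleVertex v n x 0 = v := by simp [cycleVertex]

@[simp] theorem cycleVertex_succ_self : cycleVertex v n x (n + 1) = v := by simp [cycleVertex]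

theorem cycleVertex_of_pos {i : ℕ} (h0 : 0 < i) (hi : i ≤ n) :
    cycleVertex v n x i = x (i - 1) := by
  simp [cycleVertex, h0, hi]

end CycleVertex

variable {α : Type*} [DecidableEq α] {H : FinHypergraph α}

theorem sum_card_le_nuV {M : Finset (Finset α)} (hM : H.IsMatching M) :
    ∑ m ∈ M, m.card ≤ H.nuV :=
  le_csSup ⟨∑ e ∈ H.E, e.card, by rintro _ ⟨N, hN, rfl⟩; exact sum_le_sum_of_subset hN.1⟩
    ⟨M, hM, rfl⟩

theorem nuV_le {k : ℕ} (h : ∀ M, H.IsMatching M → ∑ m ∈ M, m.card ≤ k) : H.nuV ≤ k :=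
  csSup_le ⟨0, ∅, ⟨empty_subset _, by simp⟩, rfl⟩ (by rintro _ ⟨M, hM, rfl⟩; exact h M hM)

theorem IsMaxVMatching.nuV_eq {M : Finset (Finset α)} (hM : H.IsMaxVMatching M) :
    H.nuV = ∑ m ∈ M, m.card :=
  le_antisymm (nuV_le hM.2) (sum_card_le_nuV hM.1)

theorem IsMatching.delV {M : Finset (Finset α)} {v : α} (hM : H.IsMatching M)
    (hv : ∀ m ∈ M, v ∉ m) : (H.delV v).IsMatching M :=
  ⟨fun m hm => mem_filter.mpr ⟨mem_image.mpr ⟨m, hM.1 hm, erase_eq_of_notMem (hv m hm)⟩,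
    H.edge_nonempty m (hM.1 hm)⟩, hM.2⟩

theorem IsMatching.exists_lift_of_delV {M' : Finset (Finset α)} {v : α}
    (hM' : (H.delV v).IsMatching M') :
    ∃ L ⊆ H.E, (∀ a ∈ L, ∀ b ∈ L, a ≠ b → a ∩ b ⊆ {v}) ∧
      ∑ m ∈ M', m.card ≤ ∑ e ∈ L, e.card := by
  have hlift : ∀ m ∈ M', ∃ e ∈ H.E, e.erase v = m := fun m hm => by
    simpa [FinHypergraph.delV] using (mem_filter.mp (hM'.1 hm)).1
  choose! g hgE hg using hlift
  have hg_inj : Set.InjOn g M' := fun a ha b hb hab => by rw [← hg a ha, ← hg b hb, hab]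
  refine ⟨M'.image g, image_subset_iff.mpr hgE, ?_, ?_⟩
  · simp only [mem_image]
    rintro _ ⟨a, ha, rfl⟩ _ ⟨b, hb, rfl⟩ hab y hy
    rw [mem_singleton]
    by_contra hyv
    obtain ⟨hya, hyb⟩ := mem_inter.mp hy
    have hya' : y ∈ a := by rw [← hg a ha]; exact mem_erase.mpr ⟨hyv, hya⟩
    have hyb' : y ∈ b := by rw [← hg b hb]; exact mem_erase.mpr ⟨hyv, hyb⟩
    exact disjoint_left.mp (hM'.2 a ha b hb fun h => hab (h ▸ rfl)) hya' hyb'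
  · rw [sum_image hg_inj]
    refine sum_le_sum fun m hm => ?_
    conv_lhs => rw [← hg m hm]
    exact card_erase_le

section StrongCycle

variable {v : α} {n : ℕ} {p : ℕ → Finset α} {x : ℕ → α}

section

variable (hx : ∀ i < n, x i ∈ p i ∧ x i ∈ p (i + 1) ∧ x i ≠ v)
  (hchord : ∀ a b, a + 2 ≤ b → b ≤ n → p a ∩ p b ⊆ {v})
include hx hchord

theorem eq_or_eq_succ_of_mem {a b : ℕ} (ha : a < n) (hb : b ≤ n) (hxb : x a ∈ p b) :
    b = a ∨ b = a + 1 := by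
  obtain ⟨hxa, hxa', hxv⟩ := hx a ha
  by_contra! h
  rcases Nat.lt_or_ge b a with hba | hab
  · exact hxv (mem_singleton.mp
      (hchord b (a + 1) (by omega) (by omega) (mem_inter.mpr ⟨hxb, hxa'⟩)))
  · exact hxv (mem_singleton.mp (hchord a b (by omega) hb (mem_inter.mpr ⟨hxa, hxb⟩)))

theorem eq_of_apply_eq {a b : ℕ} (ha : a < n) (hb : b < n) (hab : x a = x b) : a = b := by
  have h1 := eq_or_eq_succ_of_mem hx hchord ha (by omega) (hab ▸ (hx b hb).2.1)
  have h2 := eq_or_eq_succ_of_mem hx hchord hb (by omega) (hab ▸ (hx a ha).2.1)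
  omega

theorem cycleVertex_eq_or_eq_of_mem (hv : ∀ i, 0 < i → i < n → v ∉ p i) {i j : ℕ} (hj : j < n + 1)
    (hi1 : 1 ≤ i) (hin : i ≤ n + 1) (h : cycleVertex v n x j ∈ p (i - 1)) :
    cycleVertex v n x j = cycleVertex v n x (i - 1) ∨
      cycleVertex v n x j = cycleVertex v n x i := by
  rcases Nat.eq_zero_or_pos j with rfl | hj0
  · rcases Nat.eq_zero_or_pos (i - 1) with hi | hi
    · exact Or.inl (by rw [hi])
    · obtain rfl : i = n + 1 := by
        by_contra h'
        exact hv (i - 1) hi (by omega) (by simpa using h)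
      simp
  · rw [cycleVertex_of_pos hj0 (by omega)] at h ⊢
    rcases eq_or_eq_succ_of_mem hx hchord (by omega) (by omega) h with h | h
    · exact Or.inr (by rw [cycleVertex_of_pos (by omega) (by omega)]; congr 1; omega)
    · exact Or.inl (by rw [cycleVertex_of_pos (by omega) (by omega)]; congr 1; omega)

theorem isStrongCycle_cycleVertex (hn : 1 ≤ n) (hE : ∀ i ≤ n, p i ∈ H.E) (hv0 : v ∈ p 0)
    (hvn : v ∈ p n) (hv : ∀ i, 0 < i → i < n → v ∉ p i) :
    H.IsStrongCycle (n + 1) (cycleVertex v n x) (fun i => p (i - 1)) := by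
  have hxv : ∀ i, 0 < i → i ≤ n → cycleVertex v n x i ≠ v := fun i h0 hi =>
    cycleVertex_of_pos h0 hi ▸ (hx (i - 1) (by omega)).2.2
  refine ⟨⟨by omega, fun i hi1 hin => ⟨hE _ (by omega), ?_, ?_⟩, fun i j hi hj hij => ?_, by simp⟩,
    fun i hi1 hin => ?_⟩
  · rcases Nat.eq_or_lt_of_le hi1 with rfl | hi1
    · simpa using hv0
    · rw [cycleVertex_of_pos (by omega) (by omega)]
      simpa [show i - 1 - 1 + 1 = i - 1 by omega] using (hx (i - 1 - 1) (by omega)).2.1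
  · rcases Nat.eq_or_lt_of_le hin with rfl | hin
    · simpa using hvn
    · rw [cycleVertex_of_pos (by omega) (by omega)]
      exact (hx (i - 1) (by omega)).1
  · rcases Nat.eq_zero_or_pos i with rfl | hi0 <;> rcases Nat.eq_zero_or_pos j with rfl | hj0
    · rfl
    · exact absurd (by simpa using hij.symm) (hxv j hj0 (by omega))
    · exact absurd (by simpa using hij) (hxv i hi0 (by omega))
    · rw [cycleVertex_of_pos hi0 (by omega), cycleVertex_of_pos hj0 (by omega)] at hij
      have := eq_of_apply_eq hx hchord (by omega) (by omega) hij
      omega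
  · calc (p (i - 1) ∩ (range (n + 1)).image (cycleVertex v n x)).card
        ≤ ({cycleVertex v n x (i - 1), cycleVertex v n x i} : Finset α).card := by
          refine card_le_card fun y hy => ?_
          obtain ⟨hyp, hyw⟩ := mem_inter.mp hy
          obtain ⟨j, hj, rfl⟩ := mem_image.mp hyw
          simpa using cycleVertex_eq_or_eq_of_mem hx hchord hv (mem_range.mp hj) hi1 hin hyp
      _ ≤ 2 := card_le_two

end

theorem exists_isStrongCycle (hn : 1 ≤ n) (hE : ∀ i ≤ n, p i ∈ H.E)
    (hmeet : ∀ i < n, ¬ p i ∩ p (i + 1) ⊆ {v})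
    (hchord : ∀ a b, a + 2 ≤ b → b ≤ n → p a ∩ p b ⊆ {v})
    (hv0 : v ∈ p 0) (hvn : v ∈ p n) (hv : ∀ i, 0 < i → i < n → v ∉ p i) :
    ∃ w e, H.IsStrongCycle (n + 1) w e := by
  have hmeet' : ∀ i < n, ∃ y, y ∈ p i ∧ y ∈ p (i + 1) ∧ y ≠ v := fun i hi => by
    obtain ⟨y, hy, hyv⟩ := not_subset.mp (hmeet i hi)
    exact ⟨y, (mem_inter.mp hy).1, (mem_inter.mp hy).2, fun h => hyv (mem_singleton.mpr h)⟩
  have : Nonempty α := ⟨v⟩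
  choose! x hx using hmeet'
  exact ⟨_, _, isStrongCycle_cycleVertex hx hchord hn hE hv0 hvn hv⟩

end StrongCycle

def MeetOutside (v : α) (G : Finset (Finset α)) (a b : Finset α) : Prop :=
  a ∈ G ∧ b ∈ G ∧ ¬ a ∩ b ⊆ {v}

instance (v : α) (G : Finset (Finset α)) : Std.Symm (MeetOutside v G) :=
  ⟨fun _ _ ⟨ha, hb, h⟩ => ⟨hb, ha, by rwa [inter_comm]⟩⟩

theorem equivalence_reflTransGen_meetOutside (v : α) (G : Finset (Finset α)) :
    Equivalence (ReflTransGen (MeetOutside v G)) :=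
  ⟨fun _ => .refl, fun h => Std.Symm.symm _ _ h, .trans⟩

section Exchange

variable {v : α} {M L : Finset (Finset α)} (hM : H.IsMatching M) (hMv : ∀ m ∈ M, v ∉ m)
  (hL : ∀ a ∈ L, ∀ b ∈ L, a ≠ b → a ∩ b ⊆ {v})
include hM hL

theorem mem_iff_notMem_of_meetOutside {a b : Finset α} (hab : MeetOutside v (M ∪ L) a b)
    (hne : a ≠ b) : a ∈ M ↔ b ∉ M := by
  obtain ⟨ha, hb, hmeet⟩ := hab
  refine ⟨fun haM hbM => hmeet ?_, fun hbM => by_contra fun haM => ?_⟩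
  · simp [disjoint_iff_inter_eq_empty.mp (hM.2 a haM b hbM hne)]
  · exact hmeet (hL a ((mem_union.mp ha).resolve_left haM) b
      ((mem_union.mp hb).resolve_left hbM) hne)

include hMv

theorem eq_of_reflTransGen_meetOutside (hH : H.Balanced) (hLE : L ⊆ H.E) {s s' : Finset α}
    (hs : s ∈ L) (hs' : s' ∈ L) (hvs : v ∈ s) (hvs' : v ∈ s')
    (h : ReflTransGen (MeetOutside v (M ∪ L)) s s') : s = s' := by
  by_contra hne
  obtain ⟨n, p, rfl, rfl, hp⟩ := h.exists_seq
  obtain ⟨n, p, hc⟩ :=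
    exists_isChordlessChain (T := fun a => a ∈ L ∧ v ∈ a) hp ⟨hs, hvs⟩ ⟨hs', hvs'⟩ hne
  have hn : 1 ≤ n := Nat.one_le_iff_ne_zero.mpr fun h => hc.first_ne_last (h ▸ rfl)
  have hG : ∀ i ≤ n, p i ∈ M ∪ L := fun i hi => by
    rcases Nat.lt_or_ge i n with hi | hi
    · exact (hc.rel i hi).1
    · simpa [show i = n - 1 + 1 by omega] using (hc.rel (n - 1) (by omega)).2.1
  have hodd : ∀ i ≤ n, (p i ∈ M ↔ Odd i) := by
    intro i hi
    induction i with
    | zero => simpa using fun h => hMv _ h hc.first.2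
    | succ k ih =>
      rw [Nat.odd_add_one, ← ih (by omega),
        mem_iff_notMem_of_meetOutside hM hL (hc.rel k (by omega)) (hc.ne_succ (by omega)), not_not]
  have heven : Even n := Nat.not_odd_iff_even.mp fun h => hMv _ ((hodd n le_rfl).mpr h) hc.last.2
  obtain ⟨w, e, hcycle⟩ := exists_isStrongCycle (H := H) hn
    (fun i hi => union_subset hM.1 hLE (hG i hi)) (fun i hi => (hc.rel i hi).2.2)
    (fun a b hab hb => not_not.mp fun h => hc.no_shortcut a b hab hb ⟨hG a (by omega), hG b hb, h⟩)
    hc.first.2 hc.last.2 fun i hi0 hin hvi => by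
      rcases mem_union.mp (hG i hin.le) with hiM | hiL
      · exact hMv _ hiM hvi
      · exact hc.not_inner i hi0 hin ⟨hiL, hvi⟩
  exact hH ⟨n + 1, w, e, hcycle, heven.add_one⟩

theorem isMatching_filter_not_union_filter (hLE : L ⊆ H.E) {P : Finset α → Prop} [DecidablePred P]
    (hclosed : ∀ a ∈ L, P a → ∀ b ∈ M \ L, ¬ a ∩ b ⊆ {v} → P b)
    (hPv : ∀ a ∈ L, ∀ b ∈ L, P a → P b → v ∈ a → v ∈ b → a = b) :
    H.IsMatching ({m ∈ M | ¬ P m} ∪ {e ∈ L | P e}) := by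
  have hcross : ∀ a ∈ M, ¬ P a → ∀ b ∈ L, P b → Disjoint a b := by
    intro a haM ha b hbL hb
    by_cases haL : a ∈ L
    · exact disjoint_of_inter_subset_singleton (hL a haL b hbL fun h => ha (h ▸ hb)) (hMv a haM)
    · refine disjoint_of_inter_subset_singleton (not_not.mp fun hab => ha ?_) (hMv a haM)
      exact hclosed b hbL hb a (mem_sdiff.mpr ⟨haM, haL⟩) (by rwa [inter_comm])
  refine ⟨union_subset ((filter_subset _ _).trans hM.1) ((filter_subset _ _).trans hLE), ?_⟩
  simp only [mem_union, mem_filter]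
  rintro a (⟨haM, ha⟩ | ⟨haL, ha⟩) b (⟨hbM, hb⟩ | ⟨hbL, hb⟩) hab
  · exact hM.2 a haM b hbM hab
  · exact hcross a haM ha b hbL hb
  · exact (hcross b hbM hb a haL ha).symm
  · by_cases hva : v ∈ a
    · rw [disjoint_comm]
      exact disjoint_of_inter_subset_singleton (hL b hbL a haL hab.symm)
        fun hvb => hab (hPv a haL b hbL ha hb hva hvb)
    · exact disjoint_of_inter_subset_singleton (hL a haL b hbL hab) hva

end Exchange

theorem sum_card_le_of_isMaxVMatching (hH : H.Balanced) {v : α} {M L : Finset (Finset α)}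
    (hMax : H.IsMaxVMatching M) (hMv : ∀ m ∈ M, v ∉ m) (hLE : L ⊆ H.E)
    (hL : ∀ a ∈ L, ∀ b ∈ L, a ≠ b → a ∩ b ⊆ {v}) :
    ∑ e ∈ L, e.card ≤ ∑ m ∈ M, m.card := by
  classical
  have hconn := equivalence_reflTransGen_meetOutside v (M ∪ L)
  refine sum_le_sum_of_forall_classes hconn fun f _ => ?_
  have hexchange := hMax.2 _ (isMatching_filter_not_union_filter hMax.1 hMv hL hLE
    (P := ReflTransGen (MeetOutside v (M ∪ L)) f)
    (fun a haL hfa b hb hab =>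
      hfa.tail ⟨mem_union_right _ haL, mem_union_left _ (mem_sdiff.mp hb).1, hab⟩)
    (fun a ha b hb hfa hfb hva hvb => eq_of_reflTransGen_meetOutside hMax.1 hMv hL hH hLE
      ha hb hva hvb (hconn.trans (hconn.symm hfa) hfb)))
  rw [sum_union (disjoint_filter_filter_not L M _).symm] at hexchange
  have hsplit := sum_filter_add_sum_filter_not M (ReflTransGen (MeetOutside v (M ∪ L)) f) card
  linarith

end FinHypergraph

/-- `⋎_V(H) = ⋎_V(H ∖ v)` for every `v ∈ D_H`. -/
theorem nuV_delV_of_mem_setD {α : Type*} [DecidableEq α] (H : FinHypergraph α)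
    (hH : H.Balanced) :
    ∀ v ∈ H.setD, H.nuV = (H.delV v).nuV := by
  rintro v ⟨-, M, hMax, hMv⟩
  rw [hMax.nuV_eq]
  refine le_antisymm (FinHypergraph.sum_card_le_nuV (hMax.1.delV hMv))
    (FinHypergraph.nuV_le fun M' hM' => ?_)
  obtain ⟨L, hLE, hL, hM'L⟩ := hM'.exists_lift_of_delV
  exact hM'L.trans (FinHypergraph.sum_card_le_of_isMaxVMatching hH hMax hMv hLE hL)
end

section
/- Let H=(V,E) be a bipartite graph (viewed as a hypergraph, i.e. all edges have cardinality at most 2 and H has no odd cycle). Then A_H = P_H and C_H = M_H. -/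
open Finset

/-- A hypergraph: a finite vertex set `V` and a finite collection `E` of nonempty
subsets of `V` whose union is `V`. -/
structure Hypergraph' (α : Type*) [DecidableEq α] where
  V : Finset α
  E : Finset (Finset α)
  edge_nonempty : ∀ e ∈ E, e.Nonempty
  edge_subset : ∀ e ∈ E, e ⊆ V
  vertex_mem : ∀ v ∈ V, ∃ e ∈ E, v ∈ e

namespace Hypergraph'

variable {α : Type*} [DecidableEq α]

/-- A cycle of length `l`: a sequence `v 0, e 1, v 1, e 2, …, e l, v l` with
`v (i-1), v i ∈ e i`, the vertices `v 0, …, v (l-1)` pairwise distinct and `v l = v 0`. -/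
def IsCycle (H : Hypergraph' α) (l : ℕ) (v : ℕ → α) (e : ℕ → Finset α) : Prop :=
  2 ≤ l ∧ (∀ i, 1 ≤ i → i ≤ l → e i ∈ H.E ∧ v (i - 1) ∈ e i ∧ v i ∈ e i) ∧
    (∀ i j, i < l → j < l → v i = v j → i = j) ∧ v l = v 0

/-- A strong cycle: no edge of the cycle contains three vertices of the cycle. -/
def IsStrongCycle (H : Hypergraph' α) (l : ℕ) (v : ℕ → α) (e : ℕ → Finset α) : Prop :=
  H.IsCycle l v e ∧ ∀ i, 1 ≤ i → i ≤ l → (e i ∩ (Finset.range l).image v).card ≤ 2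

/-- A hypergraph is balanced if it has no strong cycle of odd length. -/
def Balanced (H : Hypergraph' α) : Prop :=
  ¬ ∃ (l : ℕ) (v : ℕ → α) (e : ℕ → Finset α), H.IsStrongCycle l v e ∧ Odd l

/-- A matching: a set of pairwise disjoint edges. -/
def IsMatching (H : Hypergraph' α) (M : Finset (Finset α)) : Prop :=
  M ⊆ H.E ∧ ∀ e ∈ M, ∀ f ∈ M, e ≠ f → Disjoint e f

/-- The `d`-matching number `⋎_d(H)`: the maximum of `∑ m ∈ M, d m` over matchings `M`. -/
noncomputable def nuW (H : Hypergraph' α) (d : Finset α → ℕ) : ℕ :=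
  sSup ((fun M => ∑ m ∈ M, d m) '' {M | H.IsMatching M})

/-- The matching number `⋎_E(H)`: the maximum number of edges of a matching. -/
noncomputable def nuE (H : Hypergraph' α) : ℕ :=
  sSup ((fun M : Finset (Finset α) => M.card) '' {M | H.IsMatching M})

/-- The matching number `⋎_V(H)`: the maximum number of vertices covered by a matching. -/
noncomputable def nuV (H : Hypergraph' α) : ℕ :=
  sSup ((fun M : Finset (Finset α) => ∑ m ∈ M, m.card) '' {M | H.IsMatching M})

/-- A `d`-vertex cover: `x : α → ℕ` with `∑_{u ∈ e} x u ≥ d e` for every edge `e`. -/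
def IsCover (H : Hypergraph' α) (d : Finset α → ℕ) (x : α → ℕ) : Prop :=
  ∀ e ∈ H.E, d e ≤ ∑ u ∈ e, x u

/-- The `d`-vertex cover number `τ_d(H)`. -/
noncomputable def tauW (H : Hypergraph' α) (d : Finset α → ℕ) : ℕ :=
  sInf ((fun x : α → ℕ => ∑ u ∈ H.V, x u) '' {x | H.IsCover d x})

/-- An `E`-vertex cover: every edge gets total weight at least `1`. -/
def IsECover (H : Hypergraph' α) (x : α → ℕ) : Prop :=
  H.IsCover (fun _ => 1) x

/-- A `V`-vertex cover: every edge `e` gets total weight at least `|e|`. -/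
def IsVCover (H : Hypergraph' α) (x : α → ℕ) : Prop :=
  H.IsCover (fun e => e.card) x

/-- The `E`-vertex cover number `τ_E(H)`. -/
noncomputable def tauE (H : Hypergraph' α) : ℕ := H.tauW (fun _ => 1)

/-- The `V`-vertex cover number `τ_V(H)`. -/
noncomputable def tauV (H : Hypergraph' α) : ℕ := H.tauW (fun e => e.card)

/-- A `V`-maximum matching: maximizes the number of covered vertices. -/
def IsMaxVMatching (H : Hypergraph' α) (M : Finset (Finset α)) : Prop :=
  H.IsMatching M ∧ ∀ M', H.IsMatching M' → ∑ m ∈ M', m.card ≤ ∑ m ∈ M, m.card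

/-- An `E`-maximum matching: maximizes the number of edges. -/
def IsMaxEMatching (H : Hypergraph' α) (M : Finset (Finset α)) : Prop :=
  H.IsMatching M ∧ ∀ M', H.IsMatching M' → M'.card ≤ M.card

/-- A minimum `V`-vertex cover. -/
def IsMinVCover (H : Hypergraph' α) (x : α → ℕ) : Prop :=
  H.IsVCover x ∧ ∀ y, H.IsVCover y → ∑ u ∈ H.V, x u ≤ ∑ u ∈ H.V, y u

/-- A minimum `E`-vertex cover. -/
def IsMinECover (H : Hypergraph' α) (x : α → ℕ) : Prop :=
  H.IsECover x ∧ ∀ y, H.IsECover y → ∑ u ∈ H.V, x u ≤ ∑ u ∈ H.V, y u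

/-- The hypergraph `H ∖ v = (V ∖ {v}, {e ∖ {v} : e ∈ E, e ∖ {v} ≠ ∅})`. -/
def delV (H : Hypergraph' α) (v : α) : Hypergraph' α where
  V := H.V.erase v
  E := (H.E.image fun e => e.erase v).filter fun e => e.Nonempty
  edge_nonempty := fun e he => (Finset.mem_filter.mp he).2
  edge_subset := by
    intro e he
    obtain ⟨f, hf, rfl⟩ := Finset.mem_image.mp (Finset.mem_filter.mp he).1
    exact Finset.erase_subset_erase v (H.edge_subset f hf)
  vertex_mem := by
    intro u hu
    obtain ⟨hne, huV⟩ := Finset.mem_erase.mp hu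
    obtain ⟨e, he, hue⟩ := H.vertex_mem u huV
    exact ⟨e.erase v,
      Finset.mem_filter.mpr ⟨Finset.mem_image_of_mem _ he,
        ⟨u, Finset.mem_erase.mpr ⟨hne, hue⟩⟩⟩,
      Finset.mem_erase.mpr ⟨hne, hue⟩⟩

/-- `D_H`: vertices not covered by at least one `V`-maximum matching. -/
def setD (H : Hypergraph' α) : Set α :=
  {v | v ∈ H.V ∧ ∃ M, H.IsMaxVMatching M ∧ ∀ m ∈ M, v ∉ m}

/-- `P_H`: vertices having weight at least `2` in every minimum `V`-vertex cover. -/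
def setP (H : Hypergraph' α) : Set α :=
  {v | v ∈ H.V ∧ ∀ x, H.IsMinVCover x → 2 ≤ x v}

/-- `M_H = V ∖ (D_H ∪ P_H)`. -/
def setM (H : Hypergraph' α) : Set α :=
  {v | v ∈ H.V ∧ v ∉ H.setD ∧ v ∉ H.setP}

/-- `A_H`: vertices outside `D_H` lying in a common edge with some vertex of `D_H`. -/
def setA (H : Hypergraph' α) : Set α :=
  {v | v ∈ H.V ∧ v ∉ H.setD ∧ ∃ e ∈ H.E, v ∈ e ∧ ∃ u ∈ H.setD, u ∈ e}

/-- `C_H = V ∖ (A_H ∪ D_H)`. -/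
def setC (H : Hypergraph' α) : Set α :=
  {v | v ∈ H.V ∧ v ∉ H.setA ∧ v ∉ H.setD}

/-- `F_H`: vertices not covered by at least one `E`-maximum matching. -/
def setF (H : Hypergraph' α) : Set α :=
  {v | v ∈ H.V ∧ ∃ M, H.IsMaxEMatching M ∧ ∀ m ∈ M, v ∉ m}

/-- `Q_H`: vertices having weight exactly `1` in every minimum `E`-vertex cover. -/
def setQ (H : Hypergraph' α) : Set α :=
  {v | v ∈ H.V ∧ ∀ x, H.IsMinECover x → x v = 1}

/-- `N_H = V ∖ (Q_H ∪ F_H)`. -/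
def setN (H : Hypergraph' α) : Set α :=
  {v | v ∈ H.V ∧ v ∉ H.setQ ∧ v ∉ H.setF}

/-- Degree of a vertex. -/
def degree (H : Hypergraph' α) (v : α) : ℕ := (H.E.filter fun e => v ∈ e).card

/-- Maximum degree `Δ(H)`. -/
def maxDegree (H : Hypergraph' α) : ℕ := H.V.sup H.degree

/-- Factor critical: `H ∖ v` has a perfect matching for every vertex `v`. -/
def FactorCritical (H : Hypergraph' α) : Prop :=
  ∀ v ∈ H.V, ∃ M, (H.delV v).IsMatching M ∧ ∀ u ∈ (H.delV v).V, ∃ m ∈ M, u ∈ m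

/-- A stable set: no subset of size at least two is contained in an edge. -/
def IsStable (H : Hypergraph' α) (S : Finset α) : Prop :=
  S ⊆ H.V ∧ ∀ T ⊆ S, 2 ≤ T.card → ∀ e ∈ H.E, ¬ T ⊆ e

/-- A maximum weight stable set with regard to the weight function `d`. -/
def IsMaxWeightStable (H : Hypergraph' α) (d : α → ℕ) (S : Finset α) : Prop :=
  H.IsStable S ∧ ∀ T, H.IsStable T → ∑ u ∈ T, d u ≤ ∑ u ∈ S, d u

/-- `K` is the subhypergraph of `H` induced by some vertex set `W`. -/
def IsSubhypergraph (H K : Hypergraph' α) : Prop :=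
  ∃ W : Finset α, W ⊆ H.V ∧ K.V = W ∧
    K.E = (H.E.image fun e => e ∩ W).filter fun e => e.Nonempty

/-- `K` is a partial hypergraph of `H`: generated by a subset of the edges of `H`. -/
def IsPartialHypergraph (H K : Hypergraph' α) : Prop := K.E ⊆ H.E

/-- `K` is a partial subhypergraph of `H`: a partial hypergraph of a subhypergraph
of `H`, or a subhypergraph of a partial hypergraph of `H`. -/
def IsPartialSubhypergraph (H K : Hypergraph' α) : Prop :=
  (∃ G : Hypergraph' α, H.IsSubhypergraph G ∧ G.IsPartialHypergraph K) ∨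
  (∃ G : Hypergraph' α, H.IsPartialHypergraph G ∧ G.IsSubhypergraph K)

end Hypergraph'

/-!
Fix a `V`-maximum matching `M` and call a vertex even (odd) if an `M`-alternating walk starting
at an `M`-exposed vertex reaches it after an even (odd) number of steps. Without odd cycles a
shortest such walk is a path. Flipping an even path shows that even vertices lie in `D_H`; an
odd vertex is matched by an edge of `M` whose other end is even, since otherwise flipping would
cover more vertices. Hence no vertex is both even and odd, and weighting even vertices `0`, the
other odd ones `2` and the rest `1` gives a `V`-vertex cover of weight `∑ m ∈ M, |m|`. By
duality every minimum `V`-vertex cover then vanishes on `D_H`, which forces weight `2` on the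
neighbours of `D_H` (`A_H ⊆ P_H`); conversely a vertex of weight `2` in this cover is odd, so it
is outside `D_H` and matched to an even vertex (`P_H ⊆ A_H`).
-/

namespace Hypergraph'

section Sequences

variable {α : Type*}

def cutOut (v : ℕ → α) (i d k : ℕ) : α := if k ≤ i then v k else v (k + d)

theorem cutOut_of_le {v : ℕ → α} {i d k : ℕ} (h : k ≤ i) : cutOut v i d k = v k := if_pos h

theorem cutOut_of_ge {v : ℕ → α} {i d k : ℕ} (hv : v i = v (i + d)) (h : i ≤ k) :
    cutOut v i d k = v (k + d) := by
  unfold cutOut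
  split_ifs with hk
  · rwa [le_antisymm hk h]
  · rfl

theorem cutOut_step {R : ℕ → α → α → Prop} {v : ℕ → α} {n i d : ℕ}
    (hR : ∀ k a b, R (k + d) a b → R k a b) (hv : v i = v (i + d))
    (hstep : ∀ k < n, R k (v k) (v (k + 1))) (hid : i + d ≤ n) :
    ∀ k < n - d, R k (cutOut v i d k) (cutOut v i d (k + 1)) := by
  intro k hk
  rcases lt_or_ge k i with hki | hik
  · rw [cutOut_of_le hki.le, cutOut_of_le hki]
    exact hstep k (by omega)
  · rw [cutOut_of_ge hv hik, cutOut_of_ge hv (by omega), Nat.add_right_comm]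
    exact hR k _ _ (hstep (k + d) (by omega))

end Sequences

variable {α : Type*} [DecidableEq α] {H : Hypergraph' α} {M : Finset (Finset α)}

def IsExposed (M : Finset (Finset α)) (a : α) : Prop := ∀ m ∈ M, a ∉ m

theorem IsMatching.eq_of_mem_of_mem (hM : H.IsMatching M) {m m' : Finset α} (hm : m ∈ M)
    (hm' : m' ∈ M) {a : α} (ha : a ∈ m) (ha' : a ∈ m') : m = m' := by
  by_contra hne
  exact Finset.disjoint_left.mp (hM.2 m hm m' hm' hne) ha ha'

theorem exists_isMaxVMatching (H : Hypergraph' α) : ∃ M, H.IsMaxVMatching M := by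
  classical
  have hne : (H.E.powerset.filter H.IsMatching).Nonempty :=
    ⟨∅, mem_filter.mpr ⟨empty_mem_powerset _, empty_subset _, by simp⟩⟩
  obtain ⟨M, hM, hmax⟩ :=
    exists_max_image _ (fun M : Finset (Finset α) => ∑ m ∈ M, m.card) hne
  exact ⟨M, (mem_filter.mp hM).2, fun M' hM' =>
    hmax M' (mem_filter.mpr ⟨mem_powerset.mpr hM'.1, hM'⟩)⟩

theorem IsMaxVMatching.sum_card_eq {M' : Finset (Finset α)} (hM : H.IsMaxVMatching M)
    (hM' : H.IsMaxVMatching M') : ∑ m ∈ M', m.card = ∑ m ∈ M, m.card :=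
  le_antisymm (hM.2 M' hM'.1) (hM'.2 M hM.1)

def exchange (M : Finset (Finset α)) (e : Finset α) : Finset (Finset α) :=
  insert e (M.filter (Disjoint e))

theorem IsMatching.exchange (hM : H.IsMatching M) {e : Finset α} (he : e ∈ H.E) :
    H.IsMatching (exchange M e) := by
  refine ⟨insert_subset he ((filter_subset _ _).trans hM.1), ?_⟩
  simp only [Hypergraph'.exchange, mem_insert, mem_filter]
  rintro f (rfl | ⟨hf, hef⟩) g (rfl | ⟨hg, heg⟩) hfg
  · exact absurd rfl hfg
  · exact heg
  · exact hef.symm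
  · exact hM.2 f hf g hg hfg

theorem sum_card_exchange {e : Finset α} (he : e.Nonempty) :
    ∑ m ∈ exchange M e, m.card + ∑ m ∈ M with ¬ Disjoint e m, m.card =
      e.card + ∑ m ∈ M, m.card := by
  have he' : e ∉ M.filter (Disjoint e) := fun h =>
    he.ne_empty (disjoint_self.mp (mem_filter.mp h).2)
  rw [exchange, sum_insert he', add_assoc, sum_filter_add_sum_filter_not]

theorem IsMaxVMatching.card_le_sum_card_of_not_disjoint (hM : H.IsMaxVMatching M)
    {e : Finset α} (he : e ∈ H.E) : e.card ≤ ∑ m ∈ M with ¬ Disjoint e m, m.card := by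
  have := sum_card_exchange (M := M) (H.edge_nonempty e he)
  have := hM.2 _ (hM.1.exchange he)
  omega

theorem IsMaxVMatching.singleton_notMem {a : α} (hM : H.IsMaxVMatching M) (ha : IsExposed M a) :
    {a} ∉ H.E := fun he => by
  have h := hM.card_le_sum_card_of_not_disjoint he
  rw [filter_false_of_mem fun m hm => by simpa using ha m hm] at h
  simp at h

theorem mem_of_not_disjoint_pair {p q : α} {f : Finset α} (hp : p ∉ f)
    (h : ¬ Disjoint {p, q} f) : q ∈ f := by
  obtain ⟨a, ha, haf⟩ := not_disjoint_iff.mp h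
  rcases mem_insert.mp ha with rfl | ha
  · exact absurd haf hp
  · rwa [mem_singleton.mp ha] at haf

theorem IsMaxVMatching.exchange_pair {p q r : α} (hM : H.IsMaxVMatching M) (hp : IsExposed M p)
    (he : {p, q} ∈ H.E) (hm : {q, r} ∈ M) (hpq : p ≠ q) (hqr : q ≠ r) (hpr : p ≠ r) :
    H.IsMaxVMatching (exchange M {p, q}) ∧ IsExposed (exchange M {p, q}) r := by
  have hmeet : M.filter (fun f => ¬ Disjoint {p, q} f) = {{q, r}} := by
    ext f
    simp only [mem_filter, mem_singleton]
    constructor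
    · rintro ⟨hf, hpf⟩
      exact hM.1.eq_of_mem_of_mem hf hm (mem_of_not_disjoint_pair (hp f hf) hpf)
        (mem_insert_self q {r})
    · rintro rfl
      exact ⟨hm, not_disjoint_iff.mpr ⟨q, by simp, by simp⟩⟩
  have hsum := sum_card_exchange (M := M) (e := {p, q}) (insert_nonempty _ _)
  rw [hmeet, sum_singleton, card_pair hpq, card_pair hqr] at hsum
  refine ⟨⟨hM.1.exchange he, fun M' hM' => (hM.2 M' hM').trans (by omega)⟩, ?_⟩
  simp only [IsExposed, exchange, mem_insert, mem_filter]
  rintro f (rfl | ⟨hf, hdisj⟩) hrf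
  · simp only [mem_insert, mem_singleton] at hrf
    rcases hrf with h | h
    exacts [hpr h.symm, hqr h.symm]
  · obtain rfl := hM.1.eq_of_mem_of_mem hf hm hrf (by simp)
    exact disjoint_left.mp hdisj (mem_insert_of_mem (mem_singleton_self q)) (mem_insert_self q {r})

theorem IsMaxVMatching.exists_mem_ne_of_pair_mem {p o : α} (hM : H.IsMaxVMatching M)
    (hp : IsExposed M p) (he : {p, o} ∈ H.E) (hpo : p ≠ o) :
    ∃ m ∈ M, o ∈ m ∧ ∃ r ∈ m, r ≠ o := by
  have h2 := hM.card_le_sum_card_of_not_disjoint he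
  rw [card_pair hpo] at h2
  by_contra! h
  set T := M.filter fun m => ¬ Disjoint {p, o} m
  have hT : ∀ m ∈ T, m ∈ M ∧ o ∈ m := fun m hm => by
    obtain ⟨hm, hmeet⟩ := mem_filter.mp hm
    exact ⟨hm, mem_of_not_disjoint_pair (hp m hm) hmeet⟩
  have hcard : ∀ m ∈ T, m.card ≤ 1 := fun m hm => card_le_one.mpr fun a ha b hb =>
    (h m (hT m hm).1 (hT m hm).2 a ha).trans (h m (hT m hm).1 (hT m hm).2 b hb).symm
  have hTcard : T.card ≤ 1 := card_le_one.mpr fun m hm m' hm' =>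
    hM.1.eq_of_mem_of_mem (hT m hm).1 (hT m' hm').1 (hT m hm).2 (hT m' hm').2
  have := sum_le_sum hcard
  simp only [sum_const, smul_eq_mul, mul_one] at this
  omega

theorem IsMatching.sum_card_le_sum {y : α → ℕ} {S : Finset α} (hM : H.IsMatching M)
    (hy : H.IsVCover y) (hS : ∀ m ∈ M, m ⊆ S) : ∑ m ∈ M, m.card ≤ ∑ v ∈ S, y v :=
  calc ∑ m ∈ M, m.card
      ≤ ∑ m ∈ M, ∑ v ∈ m, y v := sum_le_sum fun m hm => hy m (hM.1 hm)
    _ = ∑ v ∈ M.biUnion id, y v := (sum_biUnion hM.2).symm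
    _ ≤ ∑ v ∈ S, y v := sum_le_sum_of_subset (biUnion_subset.mpr hS)

theorem IsMinVCover.eq_zero_of_mem_setD {x y : α → ℕ} (hM : H.IsMaxVMatching M)
    (hx : H.IsVCover x) (hxM : ∑ v ∈ H.V, x v ≤ ∑ m ∈ M, m.card) (hy : H.IsMinVCover y)
    {u : α} (hu : u ∈ H.setD) : y u = 0 := by
  obtain ⟨huV, Mu, hMu, hexp⟩ := hu
  have hle := hMu.1.sum_card_le_sum (S := H.V.erase u) hy.1 fun m hm v hv =>
    mem_erase.mpr ⟨fun h => hexp m hm (h ▸ hv), H.edge_subset m (hMu.1.1 hm) hv⟩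
  have := hy.2 x hx
  have := add_sum_erase _ y huV
  have := hMu.sum_card_eq hM
  omega

theorem eq_pair_of_card_le_two {e : Finset α} (he : e.card ≤ 2) {p q : α} (hp : p ∈ e)
    (hq : q ∈ e) (hpq : p ≠ q) : e = {p, q} :=
  (eq_of_subset_of_card_le (insert_subset hp (singleton_subset_iff.mpr hq))
    (by rw [card_pair hpq]; exact he)).symm

def Adj (H : Hypergraph' α) (a b : α) : Prop := a ≠ b ∧ ∃ e ∈ H.E, a ∈ e ∧ b ∈ e

def HasOddCycle (H : Hypergraph' α) : Prop :=
  ∃ (l : ℕ) (v : ℕ → α) (e : ℕ → Finset α), H.IsCycle l v e ∧ Odd l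

theorem exists_isCycle {n : ℕ} {v : ℕ → α} (hn : 2 ≤ n)
    (hadj : ∀ i < n, H.Adj (v i) (v (i + 1)))
    (hinj : ∀ i j, i < n → j < n → v i = v j → i = j) (hclosed : v n = v 0) :
    ∃ e, H.IsCycle n v e := by
  have hedge : ∀ i, ∃ e : Finset α,
      1 ≤ i → i ≤ n → e ∈ H.E ∧ v (i - 1) ∈ e ∧ v i ∈ e := by
    intro i
    by_cases hi : 1 ≤ i ∧ i ≤ n
    · obtain ⟨-, e, he⟩ := hadj (i - 1) (by omega)
      rw [Nat.sub_add_cancel hi.1] at he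
      exact ⟨e, fun _ _ => he⟩
    · exact ⟨∅, fun h1 h2 => absurd ⟨h1, h2⟩ hi⟩
  choose e he using hedge
  exact ⟨e, hn, he, hinj, hclosed⟩

/-- A shortest odd closed walk is a cycle: at a repeated vertex it splits into two shorter
closed walks, one of which is odd. -/
theorem hasOddCycle_of_closed_walk {n : ℕ} {v : ℕ → α}
    (hadj : ∀ i < n, H.Adj (v i) (v (i + 1))) (hclosed : v n = v 0) (hn : Odd n) :
    H.HasOddCycle := by
  induction n using Nat.strong_induction_on generalizing v with
  | _ n ih =>
  by_cases hinj : ∀ i j, i < n → j < n → v i = v j → i = j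
  · have h2 : 2 ≤ n := by
      by_contra h
      obtain rfl : n = 1 := by obtain ⟨k, rfl⟩ := hn; omega
      exact (hadj 0 one_pos).1 hclosed.symm
    obtain ⟨e, he⟩ := exists_isCycle h2 hadj hinj hclosed
    exact ⟨n, v, e, he, hn⟩
  obtain ⟨i, j, hij, hjn, hv⟩ : ∃ i j, i < j ∧ j < n ∧ v i = v j := by
    push Not at hinj
    obtain ⟨i, j, hi, hj, hv, hne⟩ := hinj
    rcases lt_or_gt_of_ne hne with h | h
    exacts [⟨i, j, h, hj, hv⟩, ⟨j, i, h, hi, hv.symm⟩]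
  obtain ⟨d, rfl⟩ := Nat.exists_eq_add_of_lt hij
  rcases Nat.even_or_odd (d + 1) with hd | hd
  · refine ih (n - (d + 1)) (by omega) (v := cutOut v i (d + 1))
      (cutOut_step (fun _ _ _ h => h) hv hadj (by omega)) ?_ (Nat.Odd.sub_even (by omega) hn hd)
    rw [cutOut_of_ge hv (by omega), Nat.sub_add_cancel (by omega), cutOut_of_le (Nat.zero_le _),
      hclosed]
  · exact ih (d + 1) (by omega) (v := fun k => v (i + k)) (fun k hk => hadj (i + k) (by omega))
      hv.symm hd

def AltStep (H : Hypergraph' α) (M : Finset (Finset α)) (i : ℕ) (a b : α) : Prop :=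
  a ≠ b ∧ ∃ e ∈ H.E, a ∈ e ∧ b ∈ e ∧ (Odd i → e ∈ M)

def IsAltWalk (H : Hypergraph' α) (M : Finset (Finset α)) (n : ℕ) (v : ℕ → α) : Prop :=
  v 0 ∈ H.V ∧ IsExposed M (v 0) ∧ ∀ i < n, H.AltStep M i (v i) (v (i + 1))

def IsAltPath (H : Hypergraph' α) (M : Finset (Finset α)) (n : ℕ) (v : ℕ → α) : Prop :=
  H.IsAltWalk M n v ∧ ∀ i j, i ≤ n → j ≤ n → v i = v j → i = j

theorem AltStep.symm {i : ℕ} {a b : α} (h : H.AltStep M i a b) : H.AltStep M i b a :=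
  ⟨h.1.symm, h.2.imp fun _ ⟨he, ha, hb, hM⟩ => ⟨he, hb, ha, hM⟩⟩

theorem AltStep.adj {i : ℕ} {a b : α} (h : H.AltStep M i a b) : H.Adj a b :=
  ⟨h.1, h.2.imp fun _ ⟨he, ha, hb, _⟩ => ⟨he, ha, hb⟩⟩

theorem AltStep.of_odd_iff {i j : ℕ} {a b : α} (hij : Odd i ↔ Odd j) (h : H.AltStep M i a b) :
    H.AltStep M j a b :=
  ⟨h.1, h.2.imp fun _ ⟨he, ha, hb, hM⟩ => ⟨he, ha, hb, hM ∘ hij.2⟩⟩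

theorem IsAltWalk.mono {n n' : ℕ} {v : ℕ → α} (hw : H.IsAltWalk M n v) (h : n' ≤ n) :
    H.IsAltWalk M n' v :=
  ⟨hw.1, hw.2.1, fun i hi => hw.2.2 i (by omega)⟩

theorem IsAltPath.mono {n n' : ℕ} {v : ℕ → α} (hp : H.IsAltPath M n v) (h : n' ≤ n) :
    H.IsAltPath M n' v :=
  ⟨hp.1.mono h, fun i j hi hj => hp.2 i j (by omega) (by omega)⟩

theorem IsAltWalk.mem_V {n : ℕ} {v : ℕ → α} (hw : H.IsAltWalk M n v) : v n ∈ H.V := by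
  cases n with
  | zero => exact hw.1
  | succ n =>
    obtain ⟨-, e, he, -, hv, -⟩ := hw.2.2 n n.lt_succ_self
    exact H.edge_subset e he hv

theorem IsAltWalk.snoc {n : ℕ} {v : ℕ → α} {b : α} (hw : H.IsAltWalk M n v)
    (hb : H.AltStep M n (v n) b) : H.IsAltWalk M (n + 1) (fun k => if k ≤ n then v k else b) := by
  refine ⟨by simpa using hw.1, by simpa using hw.2.1, fun i hi => ?_⟩
  rcases Nat.lt_or_eq_of_le (Nat.lt_succ_iff.mp hi) with hi | rfl
  · simpa [hi.le, Nat.succ_le_of_lt hi] using hw.2.2 i hi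
  · simpa using hb

theorem IsAltWalk.append_reverse {n n' : ℕ} {v w : ℕ → α} (hv : H.IsAltWalk M n v)
    (hw : H.IsAltWalk M n' w) (hvw : v n = w n') (hnn' : Odd (n + n')) :
    H.IsAltWalk M (n + n') (fun k => if k ≤ n then v k else w (n + n' - k)) := by
  refine ⟨by simpa using hv.1, by simpa using hv.2.1, fun i hi => ?_⟩
  by_cases hin : i < n
  · simpa [hin.le, Nat.succ_le_of_lt hin] using hv.2.2 i hin
  have hj : n + n' - (i + 1) + 1 = n + n' - i := by omega
  have hstep := (hw.2.2 (n + n' - (i + 1)) (by omega)).symm.of_odd_iff (j := i) (by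
    rw [Nat.odd_iff] at hnn'
    rw [Nat.odd_iff, Nat.odd_iff]
    omega)
  rw [hj] at hstep
  have hi' : ¬ i + 1 ≤ n := by omega
  by_cases hin' : i ≤ n
  · obtain rfl : i = n := by omega
    simpa [hi', hvw] using hstep
  · simpa [hi', hin'] using hstep

/-- A shortest alternating walk to a given vertex and parity is a path: a repeated vertex
either closes an even loop, which can be cut out, or an odd closed walk. -/
theorem IsAltWalk.exists_isAltPath (hbip : ¬ H.HasOddCycle) {n : ℕ} {v : ℕ → α}
    (hw : H.IsAltWalk M n v) :
    ∃ n' w, H.IsAltPath M n' w ∧ w n' = v n ∧ (Odd n' ↔ Odd n) := by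
  induction n using Nat.strong_induction_on generalizing v with
  | _ n ih =>
  by_cases hinj : ∀ i j, i ≤ n → j ≤ n → v i = v j → i = j
  · exact ⟨n, v, ⟨hw, hinj⟩, rfl, Iff.rfl⟩
  obtain ⟨i, d, hid, hv⟩ : ∃ i d, i + (d + 1) ≤ n ∧ v i = v (i + (d + 1)) := by
    push Not at hinj
    obtain ⟨i, j, hi, hj, hv, hne⟩ := hinj
    rcases lt_or_gt_of_ne hne with h | h
    · exact ⟨i, j - i - 1, by omega, by rwa [show i + (j - i - 1 + 1) = j by omega]⟩
    · exact ⟨j, i - j - 1, by omega, by rw [show j + (i - j - 1 + 1) = i by omega, hv]⟩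
  rcases Nat.even_or_odd (d + 1) with ⟨c, hc⟩ | hd
  · have hcut : H.IsAltWalk M (n - (d + 1)) (cutOut v i (d + 1)) := by
      refine ⟨?_, ?_, cutOut_step (fun k a b h => h.of_odd_iff ?_) hv hw.2.2 hid⟩
      · rw [cutOut_of_le (Nat.zero_le i)]; exact hw.1
      · rw [cutOut_of_le (Nat.zero_le i)]; exact hw.2.1
      · rw [Nat.odd_iff, Nat.odd_iff]; omega
    obtain ⟨n', w, hp, hwn, hpar⟩ := ih _ (by omega) hcut
    refine ⟨n', w, hp, ?_, ?_⟩
    · rw [hwn, cutOut_of_ge hv (by omega), Nat.sub_add_cancel (by omega)]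
    · rw [hpar, Nat.odd_iff, Nat.odd_iff]; omega
  · exact absurd (hasOddCycle_of_closed_walk (v := fun k => v (i + k))
      (fun k hk => (hw.2.2 (i + k) (by omega)).adj) hv.symm hd) hbip

theorem IsAltPath.notMem_image {n m i : ℕ} {v : ℕ → α} (hp : H.IsAltPath M n v) (hmi : m < i)
    (hi : i ≤ n) : v i ∉ (range (m + 1)).image v := by
  simp only [mem_image, mem_range, not_exists, not_and]
  intro j hj h
  have := hp.2 j i (by omega) hi h
  omega

/-- `M'` is `M` with the edges of the path switched in and out. -/
theorem IsAltPath.exists_flip (hg : ∀ e ∈ H.E, e.card ≤ 2) (hM : H.IsMaxVMatching M) {k : ℕ}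
    {v : ℕ → α} (hp : H.IsAltPath M (2 * k) v) :
    ∃ M', H.IsMaxVMatching M' ∧ IsExposed M' (v (2 * k)) ∧
      (∀ m ∈ M, Disjoint m ((range (2 * k + 1)).image v) → m ∈ M') ∧
      ∀ m ∈ M', m ∈ M ∨ m ⊆ (range (2 * k + 1)).image v := by
  induction k with
  | zero => exact ⟨M, hM, hp.1.2.1, fun m hm _ => hm, fun m hm => Or.inl hm⟩
  | succ k ih =>
    obtain ⟨M', hM', hexp, hkeep, hnew⟩ := ih (hp.mono (by omega))
    rw [show 2 * (k + 1) = 2 * k + 1 + 1 by ring] at hp ⊢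
    obtain ⟨hpq, e, he, hpe, hqe, -⟩ := hp.1.2.2 (2 * k) (by omega)
    obtain ⟨hqr, m, hmE, hqm, hrm, hmM⟩ := hp.1.2.2 (2 * k + 1) (by omega)
    rw [eq_pair_of_card_le_two (hg e he) hpe hqe hpq] at he
    rw [eq_pair_of_card_le_two (hg m hmE) hqm hrm hqr] at hmM
    have hpr : v (2 * k) ≠ v (2 * k + 1 + 1) := fun h => by
      have := hp.2 _ _ (by omega) le_rfl h
      omega
    have hmM' : {v (2 * k + 1), v (2 * k + 1 + 1)} ∈ M' := by
      refine hkeep _ (hmM (odd_two_mul_add_one k)) ?_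
      simp only [disjoint_insert_left, disjoint_singleton_left]
      exact ⟨hp.notMem_image (by omega) (by omega), hp.notMem_image (by omega) le_rfl⟩
    obtain ⟨hmax, hexpr⟩ := hM'.exchange_pair hexp he hmM' hpq hqr hpr
    have hSS : (range (2 * k + 1)).image v ⊆ (range (2 * k + 1 + 1 + 1)).image v :=
      image_subset_image (range_subset_range.mpr (by omega))
    have hpqS : {v (2 * k), v (2 * k + 1)} ⊆ (range (2 * k + 1 + 1 + 1)).image v := by
      simp only [insert_subset_iff, singleton_subset_iff]
      exact ⟨mem_image_of_mem v (mem_range.mpr (by omega)),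
        mem_image_of_mem v (mem_range.mpr (by omega))⟩
    refine ⟨_, hmax, hexpr, fun f hf hdisj => ?_, fun f hf => ?_⟩
    · exact mem_insert_of_mem (mem_filter.mpr
        ⟨hkeep f hf (hdisj.mono_right hSS), (hdisj.mono_right hpqS).symm⟩)
    · rcases mem_insert.mp hf with rfl | hf
      · exact Or.inr hpqS
      · exact (hnew f (mem_filter.mp hf).1).imp_right fun h => h.trans hSS

def EvenReachable (H : Hypergraph' α) (M : Finset (Finset α)) (a : α) : Prop :=
  ∃ n v, H.IsAltWalk M n v ∧ v n = a ∧ Even n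

def OddReachable (H : Hypergraph' α) (M : Finset (Finset α)) (a : α) : Prop :=
  ∃ n v, H.IsAltWalk M n v ∧ v n = a ∧ Odd n

theorem evenReachable_of_isExposed {a : α} (ha : a ∈ H.V) (hexp : IsExposed M a) :
    H.EvenReachable M a :=
  ⟨0, fun _ => a, ⟨ha, hexp, fun _ h => absurd h (Nat.not_lt_zero _)⟩, rfl, Even.zero⟩

theorem EvenReachable.oddReachable_of_mem {a b : α} {e : Finset α} (ha : H.EvenReachable M a)
    (he : e ∈ H.E) (hae : a ∈ e) (hbe : b ∈ e) (hab : a ≠ b) : H.OddReachable M b := by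
  obtain ⟨n, v, hw, rfl, hn⟩ := ha
  have hstep : H.AltStep M n (v n) b :=
    ⟨hab, e, he, hae, hbe, fun h => (Nat.not_odd_iff_even.mpr hn h).elim⟩
  exact ⟨n + 1, _, hw.snoc hstep, by simp, hn.add_one⟩

theorem OddReachable.evenReachable_of_mem {o r : α} {m : Finset α} (hM : H.IsMatching M)
    (ho : H.OddReachable M o) (hm : m ∈ M) (hom : o ∈ m) (hrm : r ∈ m) (hor : o ≠ r) :
    H.EvenReachable M r := by
  obtain ⟨n, v, hw, rfl, hn⟩ := ho
  exact ⟨n + 1, _, hw.snoc ⟨hor, m, hM.1 hm, hom, hrm, fun _ => hm⟩, by simp, hn.add_one⟩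

theorem EvenReachable.exists_isExposed (hg : ∀ e ∈ H.E, e.card ≤ 2) (hbip : ¬ H.HasOddCycle)
    (hM : H.IsMaxVMatching M) {a : α} (ha : H.EvenReachable M a) :
    ∃ M', H.IsMaxVMatching M' ∧ IsExposed M' a := by
  obtain ⟨n, v, hw, rfl, hn⟩ := ha
  obtain ⟨n', w, hp, hwn, hpar⟩ := hw.exists_isAltPath hbip
  have hn' : Even n' := Nat.not_odd_iff_even.mp (hpar.not.mpr (Nat.not_odd_iff_even.mpr hn))
  obtain ⟨k, rfl⟩ := hn'.two_dvd
  obtain ⟨M', hM', hexp, -, -⟩ := hp.exists_flip hg hM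
  exact ⟨M', hM', hwn ▸ hexp⟩

theorem EvenReachable.mem_setD (hg : ∀ e ∈ H.E, e.card ≤ 2) (hbip : ¬ H.HasOddCycle)
    (hM : H.IsMaxVMatching M) {a : α} (ha : H.EvenReachable M a) : a ∈ H.setD := by
  obtain ⟨M', hM', hexp⟩ := ha.exists_isExposed hg hbip hM
  obtain ⟨n, v, hw, rfl, -⟩ := ha
  exact ⟨hw.mem_V, M', hM', hexp⟩

/-- Otherwise flipping an alternating path up to the vertex before `o` and then adding the last
edge of the path would cover more vertices. -/
theorem OddReachable.exists_mem_ne (hg : ∀ e ∈ H.E, e.card ≤ 2) (hbip : ¬ H.HasOddCycle)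
    (hM : H.IsMaxVMatching M) {o : α} (ho : H.OddReachable M o) :
    ∃ m ∈ M, o ∈ m ∧ ∃ r ∈ m, r ≠ o := by
  obtain ⟨n, v, hw, rfl, hn⟩ := ho
  obtain ⟨n', w, hp, hwn, hpar⟩ := hw.exists_isAltPath hbip
  obtain ⟨k, rfl⟩ := hpar.mpr hn
  rw [← hwn]
  obtain ⟨M', hM', hexp, -, hnew⟩ := (hp.mono (Nat.le_succ _)).exists_flip hg hM
  obtain ⟨hpo, e, he, hpe, hoe, -⟩ := hp.1.2.2 (2 * k) (by omega)
  rw [eq_pair_of_card_le_two (hg e he) hpe hoe hpo] at he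
  obtain ⟨m, hm, hom, hr⟩ := hM'.exists_mem_ne_of_pair_mem hexp he hpo
  refine ⟨m, (hnew m hm).resolve_right fun hmS => ?_, hom, hr⟩
  exact hp.notMem_image (Nat.lt_succ_self _) le_rfl (hmS hom)

theorem not_oddReachable_of_isExposed (hg : ∀ e ∈ H.E, e.card ≤ 2) (hbip : ¬ H.HasOddCycle)
    (hM : H.IsMaxVMatching M) {a : α} (hexp : IsExposed M a) : ¬ H.OddReachable M a := by
  intro ha
  obtain ⟨m, hm, ham, -⟩ := ha.exists_mem_ne hg hbip hM
  exact hexp m hm ham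

theorem EvenReachable.not_oddReachable (hg : ∀ e ∈ H.E, e.card ≤ 2) (hbip : ¬ H.HasOddCycle)
    (hM : H.IsMaxVMatching M) {a : α} (he : H.EvenReachable M a) : ¬ H.OddReachable M a := by
  rintro ⟨n', w, hw, hwa, hn'⟩
  obtain ⟨n, v, hv, hva, hn⟩ := he
  refine not_oddReachable_of_isExposed hg hbip hM hw.2.1
    ⟨n + n', _, hv.append_reverse hw (hva.trans hwa.symm) (hn.add_odd hn'), ?_, hn.add_odd hn'⟩
  simp [hn'.pos.ne']

open Classical in
noncomputable def parityCover (H : Hypergraph' α) (M : Finset (Finset α)) (a : α) : ℕ :=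
  if H.EvenReachable M a then 0 else if H.OddReachable M a then 2 else 1

theorem one_le_parityCover {a : α} (ha : ¬ H.EvenReachable M a) : 1 ≤ H.parityCover M a := by
  unfold parityCover
  split_ifs <;> omega

theorem parityCover_le_one {a : α} (ha : ¬ (H.OddReachable M a ∧ ¬ H.EvenReachable M a)) :
    H.parityCover M a ≤ 1 := by
  unfold parityCover
  split_ifs <;> tauto

theorem isVCover_parityCover (hg : ∀ e ∈ H.E, e.card ≤ 2) (hbip : ¬ H.HasOddCycle)
    (hM : H.IsMaxVMatching M) : H.IsVCover (H.parityCover M) := by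
  have hpair : ∀ a b, {a, b} ∈ H.E → a ≠ b → H.EvenReachable M a →
      H.parityCover M b = 2 :=
    fun a b he hab ha => by
      have hb := ha.oddReachable_of_mem he (mem_insert_self a {b}) (by simp) hab
      have hnb : ¬ H.EvenReachable M b := fun h => h.not_oddReachable hg hbip hM hb
      simp [parityCover, hb, hnb]
  intro e he
  show e.card ≤ ∑ v ∈ e, H.parityCover M v
  have h1 : 1 ≤ e.card := card_pos.mpr (H.edge_nonempty e he)
  rcases (by have := hg e he; omega : e.card = 1 ∨ e.card = 2) with h | h
  · obtain ⟨a, rfl⟩ := card_eq_one.mp h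
    rw [sum_singleton, card_singleton]
    refine one_le_parityCover fun ha => ?_
    obtain ⟨M', hM', hexp⟩ := ha.exists_isExposed hg hbip hM
    exact hM'.singleton_notMem hexp he
  · obtain ⟨a, b, hab, rfl⟩ := card_eq_two.mp h
    rw [sum_pair hab, card_pair hab]
    by_cases ha : H.EvenReachable M a
    · rw [hpair a b he hab ha]; omega
    by_cases hb : H.EvenReachable M b
    · rw [hpair b a (pair_comm a b ▸ he) hab.symm hb]; omega
    have := one_le_parityCover ha
    have := one_le_parityCover hb
    omega

/-- Weight sits on matched vertices only, and an edge of `M` never carries more than its size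
because an odd vertex is matched to an even one. -/
theorem sum_parityCover_le (hg : ∀ e ∈ H.E, e.card ≤ 2) (hbip : ¬ H.HasOddCycle)
    (hM : H.IsMaxVMatching M) : ∑ v ∈ H.V, H.parityCover M v ≤ ∑ m ∈ M, m.card := by
  have hexposed : ∀ v ∈ H.V, v ∉ M.biUnion id → H.parityCover M v = 0 := fun v hv hvM => by
    have hexp : IsExposed M v := fun m hm hvm => hvM (mem_biUnion.mpr ⟨m, hm, hvm⟩)
    simp [parityCover, evenReachable_of_isExposed hv hexp]
  have hedge : ∀ m ∈ M, ∑ v ∈ m, H.parityCover M v ≤ m.card := fun m hm => by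
    by_cases hodd : ∃ a ∈ m, H.OddReachable M a ∧ ¬ H.EvenReachable M a
    · obtain ⟨a, ham, ha, hna⟩ := hodd
      obtain ⟨m', hm', ham', r, hrm', hra⟩ := ha.exists_mem_ne hg hbip hM
      obtain rfl := hM.1.eq_of_mem_of_mem hm' hm ham' ham
      have hr := ha.evenReachable_of_mem hM.1 hm' ham' hrm' hra.symm
      rw [eq_pair_of_card_le_two (hg m' (hM.1.1 hm')) ham' hrm' hra.symm, sum_pair hra.symm,
        card_pair hra.symm]
      simp [parityCover, hr, ha, hna]
    · push Not at hodd
      rw [card_eq_sum_ones]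
      exact sum_le_sum fun a ha => parityCover_le_one fun h => h.2 (hodd a ha h.1)
  calc ∑ v ∈ H.V, H.parityCover M v = ∑ v ∈ M.biUnion id, H.parityCover M v :=
        (sum_subset (biUnion_subset.mpr fun m hm => H.edge_subset m (hM.1.1 hm)) hexposed).symm
    _ = ∑ m ∈ M, ∑ v ∈ m, H.parityCover M v := sum_biUnion hM.1.2
    _ ≤ ∑ m ∈ M, m.card := sum_le_sum hedge

theorem isMinVCover_parityCover (hg : ∀ e ∈ H.E, e.card ≤ 2) (hbip : ¬ H.HasOddCycle)
    (hM : H.IsMaxVMatching M) : H.IsMinVCover (H.parityCover M) :=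
  ⟨isVCover_parityCover hg hbip hM, fun _ hy => (sum_parityCover_le hg hbip hM).trans
    (hM.1.sum_card_le_sum hy fun m hm => H.edge_subset m (hM.1.1 hm))⟩

theorem setA_subset_setP (hg : ∀ e ∈ H.E, e.card ≤ 2)
    (hslack : ∀ y, H.IsMinVCover y → ∀ u ∈ H.setD, y u = 0) : H.setA ⊆ H.setP := by
  rintro v ⟨hvV, hvD, e, he, hve, u, huD, hue⟩
  refine ⟨hvV, fun y hy => ?_⟩
  have huv : u ≠ v := fun h => hvD (h ▸ huD)
  have hcov : e.card ≤ ∑ w ∈ e, y w := hy.1 e he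
  rw [eq_pair_of_card_le_two (hg e he) hue hve huv, sum_pair huv, card_pair huv,
    hslack y hy u huD] at hcov
  omega

theorem setP_subset_setA (hg : ∀ e ∈ H.E, e.card ≤ 2) (hbip : ¬ H.HasOddCycle)
    (hM : H.IsMaxVMatching M) (hslack : ∀ y, H.IsMinVCover y → ∀ u ∈ H.setD, y u = 0) :
    H.setP ⊆ H.setA := by
  rintro v ⟨hvV, hvP⟩
  have hmin := isMinVCover_parityCover hg hbip hM
  have h2 := hvP _ hmin
  have hvD : v ∉ H.setD := fun hD => by have := hslack _ hmin v hD; omega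
  have hv : H.OddReachable M v := by
    unfold parityCover at h2
    split_ifs at h2 with _ h
    · omega
    · exact h
    · omega
  obtain ⟨m, hm, hvm, r, hrm, hrv⟩ := hv.exists_mem_ne hg hbip hM
  exact ⟨hvV, hvD, m, hM.1.1 hm, hvm, r,
    (hv.evenReachable_of_mem hM.1 hm hvm hrm hrv.symm).mem_setD hg hbip hM, hrm⟩

theorem setC_eq_setM_of_setA_eq_setP (h : H.setA = H.setP) : H.setC = H.setM := by
  ext v
  simp only [setC, setM, h, Set.mem_ofPred_eq]
  tauto

end Hypergraph'

/-- for a bipartite graph (all edges of cardinality at most two and no odd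
cycle), `A_H = P_H` and `C_H = M_H`. -/
theorem bipartite_decompositions_eq {α : Type*} [DecidableEq α] (H : Hypergraph' α)
    (hgraph : ∀ e ∈ H.E, e.card ≤ 2)
    (hbip : ¬ ∃ (l : ℕ) (v : ℕ → α) (e : ℕ → Finset α), H.IsCycle l v e ∧ Odd l) :
    H.setA = H.setP ∧ H.setC = H.setM := by
  obtain ⟨M, hM⟩ := H.exists_isMaxVMatching
  have hslack : ∀ y, H.IsMinVCover y → ∀ u ∈ H.setD, y u = 0 := fun y hy u hu =>
    hy.eq_zero_of_mem_setD hM (Hypergraph'.isVCover_parityCover hgraph hbip hM)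
      (Hypergraph'.sum_parityCover_le hgraph hbip hM) hu
  have hAP : H.setA = H.setP := (Hypergraph'.setA_subset_setP hgraph hslack).antisymm
    (Hypergraph'.setP_subset_setA hgraph hbip hM hslack)
  exact ⟨hAP, Hypergraph'.setC_eq_setM_of_setA_eq_setP hAP⟩
end

section
/- Let H=(V,E) be a balanced hypergraph. Then ⋎_E(H) = ⋎_E(H∖v) for every v ∈ F_H and for every v ∈ N_H. -/
open Finset

/-- A hypergraph: a finite vertex set `V` and a finite collection `E` of nonempty
subsets of `V` whose union is `V`. -/
structure FinsetHypergraph (α : Type*) [DecidableEq α] where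
  V : Finset α
  E : Finset (Finset α)
  edge_nonempty : ∀ e ∈ E, e.Nonempty
  edge_subset : ∀ e ∈ E, e ⊆ V
  vertex_mem : ∀ v ∈ V, ∃ e ∈ E, v ∈ e

namespace FinsetHypergraph

variable {α : Type*} [DecidableEq α]

/-- A cycle of length `l`: a sequence `v 0, e 1, v 1, e 2, …, e l, v l` with
`v (i-1), v i ∈ e i`, the vertices `v 0, …, v (l-1)` pairwise distinct and `v l = v 0`. -/
def IsCycle (H : FinsetHypergraph α) (l : ℕ) (v : ℕ → α) (e : ℕ → Finset α) : Prop :=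
  2 ≤ l ∧ (∀ i, 1 ≤ i → i ≤ l → e i ∈ H.E ∧ v (i - 1) ∈ e i ∧ v i ∈ e i) ∧
    (∀ i j, i < l → j < l → v i = v j → i = j) ∧ v l = v 0

/-- A strong cycle: no edge of the cycle contains three vertices of the cycle. -/
def IsStrongCycle (H : FinsetHypergraph α) (l : ℕ) (v : ℕ → α) (e : ℕ → Finset α) : Prop :=
  H.IsCycle l v e ∧ ∀ i, 1 ≤ i → i ≤ l → (e i ∩ (Finset.range l).image v).card ≤ 2

/-- A hypergraph is balanced if it has no strong cycle of odd length. -/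
def Balanced (H : FinsetHypergraph α) : Prop :=
  ¬ ∃ (l : ℕ) (v : ℕ → α) (e : ℕ → Finset α), H.IsStrongCycle l v e ∧ Odd l

/-- A matching: a set of pairwise disjoint edges. -/
def IsMatching (H : FinsetHypergraph α) (M : Finset (Finset α)) : Prop :=
  M ⊆ H.E ∧ ∀ e ∈ M, ∀ f ∈ M, e ≠ f → Disjoint e f

/-- The `d`-matching number `⋎_d(H)`: the maximum of `∑ m ∈ M, d m` over matchings `M`. -/
noncomputable def nuW (H : FinsetHypergraph α) (d : Finset α → ℕ) : ℕ :=
  sSup ((fun M => ∑ m ∈ M, d m) '' {M | H.IsMatching M})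

/-- The matching number `⋎_E(H)`: the maximum number of edges of a matching. -/
noncomputable def nuE (H : FinsetHypergraph α) : ℕ :=
  sSup ((fun M : Finset (Finset α) => M.card) '' {M | H.IsMatching M})

/-- The matching number `⋎_V(H)`: the maximum number of vertices covered by a matching. -/
noncomputable def nuV (H : FinsetHypergraph α) : ℕ :=
  sSup ((fun M : Finset (Finset α) => ∑ m ∈ M, m.card) '' {M | H.IsMatching M})

/-- A `d`-vertex cover: `x : α → ℕ` with `∑_{u ∈ e} x u ≥ d e` for every edge `e`. -/
def IsCover (H : FinsetHypergraph α) (d : Finset α → ℕ) (x : α → ℕ) : Prop :=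
  ∀ e ∈ H.E, d e ≤ ∑ u ∈ e, x u

/-- The `d`-vertex cover number `τ_d(H)`. -/
noncomputable def tauW (H : FinsetHypergraph α) (d : Finset α → ℕ) : ℕ :=
  sInf ((fun x : α → ℕ => ∑ u ∈ H.V, x u) '' {x | H.IsCover d x})

/-- An `E`-vertex cover: every edge gets total weight at least `1`. -/
def IsECover (H : FinsetHypergraph α) (x : α → ℕ) : Prop :=
  H.IsCover (fun _ => 1) x

/-- A `V`-vertex cover: every edge `e` gets total weight at least `|e|`. -/
def IsVCover (H : FinsetHypergraph α) (x : α → ℕ) : Prop :=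
  H.IsCover (fun e => e.card) x

/-- The `E`-vertex cover number `τ_E(H)`. -/
noncomputable def tauE (H : FinsetHypergraph α) : ℕ := H.tauW (fun _ => 1)

/-- The `V`-vertex cover number `τ_V(H)`. -/
noncomputable def tauV (H : FinsetHypergraph α) : ℕ := H.tauW (fun e => e.card)

/-- A `V`-maximum matching: maximizes the number of covered vertices. -/
def IsMaxVMatching (H : FinsetHypergraph α) (M : Finset (Finset α)) : Prop :=
  H.IsMatching M ∧ ∀ M', H.IsMatching M' → ∑ m ∈ M', m.card ≤ ∑ m ∈ M, m.card

/-- An `E`-maximum matching: maximizes the number of edges. -/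
def IsMaxEMatching (H : FinsetHypergraph α) (M : Finset (Finset α)) : Prop :=
  H.IsMatching M ∧ ∀ M', H.IsMatching M' → M'.card ≤ M.card

/-- A minimum `V`-vertex cover. -/
def IsMinVCover (H : FinsetHypergraph α) (x : α → ℕ) : Prop :=
  H.IsVCover x ∧ ∀ y, H.IsVCover y → ∑ u ∈ H.V, x u ≤ ∑ u ∈ H.V, y u

/-- A minimum `E`-vertex cover. -/
def IsMinECover (H : FinsetHypergraph α) (x : α → ℕ) : Prop :=
  H.IsECover x ∧ ∀ y, H.IsECover y → ∑ u ∈ H.V, x u ≤ ∑ u ∈ H.V, y u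

/-- The hypergraph `H ∖ v = (V ∖ {v}, {e ∖ {v} : e ∈ E, e ∖ {v} ≠ ∅})`. -/
def delV (H : FinsetHypergraph α) (v : α) : FinsetHypergraph α where
  V := H.V.erase v
  E := (H.E.image fun e => e.erase v).filter fun e => e.Nonempty
  edge_nonempty := fun e he => (Finset.mem_filter.mp he).2
  edge_subset := by
    intro e he
    obtain ⟨f, hf, rfl⟩ := Finset.mem_image.mp (Finset.mem_filter.mp he).1
    exact Finset.erase_subset_erase v (H.edge_subset f hf)
  vertex_mem := by
    intro u hu
    obtain ⟨hne, huV⟩ := Finset.mem_erase.mp hu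
    obtain ⟨e, he, hue⟩ := H.vertex_mem u huV
    exact ⟨e.erase v,
      Finset.mem_filter.mpr ⟨Finset.mem_image_of_mem _ he,
        ⟨u, Finset.mem_erase.mpr ⟨hne, hue⟩⟩⟩,
      Finset.mem_erase.mpr ⟨hne, hue⟩⟩

/-- `D_H`: vertices not covered by at least one `V`-maximum matching. -/
def setD (H : FinsetHypergraph α) : Set α :=
  {v | v ∈ H.V ∧ ∃ M, H.IsMaxVMatching M ∧ ∀ m ∈ M, v ∉ m}

/-- `P_H`: vertices having weight at least `2` in every minimum `V`-vertex cover. -/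
def setP (H : FinsetHypergraph α) : Set α :=
  {v | v ∈ H.V ∧ ∀ x, H.IsMinVCover x → 2 ≤ x v}

/-- `M_H = V ∖ (D_H ∪ P_H)`. -/
def setM (H : FinsetHypergraph α) : Set α :=
  {v | v ∈ H.V ∧ v ∉ H.setD ∧ v ∉ H.setP}

/-- `A_H`: vertices outside `D_H` lying in a common edge with some vertex of `D_H`. -/
def setA (H : FinsetHypergraph α) : Set α :=
  {v | v ∈ H.V ∧ v ∉ H.setD ∧ ∃ e ∈ H.E, v ∈ e ∧ ∃ u ∈ H.setD, u ∈ e}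

/-- `C_H = V ∖ (A_H ∪ D_H)`. -/
def setC (H : FinsetHypergraph α) : Set α :=
  {v | v ∈ H.V ∧ v ∉ H.setA ∧ v ∉ H.setD}

/-- `F_H`: vertices not covered by at least one `E`-maximum matching. -/
def setF (H : FinsetHypergraph α) : Set α :=
  {v | v ∈ H.V ∧ ∃ M, H.IsMaxEMatching M ∧ ∀ m ∈ M, v ∉ m}

/-- `Q_H`: vertices having weight exactly `1` in every minimum `E`-vertex cover. -/
def setQ (H : FinsetHypergraph α) : Set α :=
  {v | v ∈ H.V ∧ ∀ x, H.IsMinECover x → x v = 1}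

/-- `N_H = V ∖ (Q_H ∪ F_H)`. -/
def setN (H : FinsetHypergraph α) : Set α :=
  {v | v ∈ H.V ∧ v ∉ H.setQ ∧ v ∉ H.setF}

/-- Degree of a vertex. -/
def degree (H : FinsetHypergraph α) (v : α) : ℕ := (H.E.filter fun e => v ∈ e).card

/-- Maximum degree `Δ(H)`. -/
def maxDegree (H : FinsetHypergraph α) : ℕ := H.V.sup H.degree

/-- Factor critical: `H ∖ v` has a perfect matching for every vertex `v`. -/
def FactorCritical (H : FinsetHypergraph α) : Prop :=
  ∀ v ∈ H.V, ∃ M, (H.delV v).IsMatching M ∧ ∀ u ∈ (H.delV v).V, ∃ m ∈ M, u ∈ m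

/-- A stable set: no subset of size at least two is contained in an edge. -/
def IsStable (H : FinsetHypergraph α) (S : Finset α) : Prop :=
  S ⊆ H.V ∧ ∀ T ⊆ S, 2 ≤ T.card → ∀ e ∈ H.E, ¬ T ⊆ e

/-- A maximum weight stable set with regard to the weight function `d`. -/
def IsMaxWeightStable (H : FinsetHypergraph α) (d : α → ℕ) (S : Finset α) : Prop :=
  H.IsStable S ∧ ∀ T, H.IsStable T → ∑ u ∈ T, d u ≤ ∑ u ∈ S, d u

/-- `K` is the subhypergraph of `H` induced by some vertex set `W`. -/
def IsSubhypergraph (H K : FinsetHypergraph α) : Prop :=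
  ∃ W : Finset α, W ⊆ H.V ∧ K.V = W ∧
    K.E = (H.E.image fun e => e ∩ W).filter fun e => e.Nonempty

/-- `K` is a partial hypergraph of `H`: generated by a subset of the edges of `H`. -/
def IsPartialHypergraph (H K : FinsetHypergraph α) : Prop := K.E ⊆ H.E

/-- `K` is a partial subhypergraph of `H`: a partial hypergraph of a subhypergraph
of `H`, or a subhypergraph of a partial hypergraph of `H`. -/
def IsPartialSubhypergraph (H K : FinsetHypergraph α) : Prop :=
  (∃ G : FinsetHypergraph α, H.IsSubhypergraph G ∧ G.IsPartialHypergraph K) ∨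
  (∃ G : FinsetHypergraph α, H.IsPartialHypergraph G ∧ G.IsSubhypergraph K)

end FinsetHypergraph

/-!
A vertex `v ∈ F_H` is missed by some maximum matching `M`; then `{v}` is not an edge, so deleting
`v` does not decrease `⋎_E`. Conversely, a matching of `H ∖ v` lifts to a family `S` of edges of
`H` any two of which meet at most in `v`. If `|S| > |M|`, join two edges of the symmetric
difference of `M` and `S` when they share a vertex other than `v`: some component has more edges
of `S` than of `M`, and exchanging it gives a larger matching, unless the component contains two
edges through `v`. A shortest path between two such edges alternates between `S` and `M`, hence
has even length, and closes at `v` into a strong cycle of odd length.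

For `v ∈ N_H` some minimum `E`-vertex cover vanishes at `v`, since minimum covers are `0/1` on
`V`. It still covers `H ∖ v`, so `⋎_E(H ∖ v) ≤ τ_E(H)`, and `τ_E(H) = ⋎_E(H)` for balanced `H`
(Berge–Las Vergnas). The latter follows from the same exchange argument by induction: for a vertex
`t` of some edge, either `t ∉ F_H`, and removing the edges through `t` lowers `⋎_E` by at least one
and `τ_E` by at most one, or `t ∈ F_H`, and deleting `t` neither raises `⋎_E` nor lowers `τ_E`.
-/

section Sequences

variable {β : Type*} {r : β → β → Prop}

theorem Relation.ReflTransGen.exists_seq_s16 {a b : β} (h : Relation.ReflTransGen r a b) :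
    ∃ n, ∃ w : ℕ → β, w 0 = a ∧ w n = b ∧ ∀ k < n, r (w k) (w (k + 1)) := by
  induction h with
  | refl => exact ⟨0, fun _ => a, rfl, rfl, fun _ h => absurd h (Nat.not_lt_zero _)⟩
  | @tail b c _ hbc ih =>
    obtain ⟨n, w, h0, hn, hw⟩ := ih
    refine ⟨n + 1, Function.update w (n + 1) c, by simp [h0], by simp, fun k hk => ?_⟩
    rcases Nat.lt_succ_iff_lt_or_eq.1 hk with hk | rfl
    · simpa [Function.update_of_ne (show k ≠ n + 1 by omega),
        Function.update_of_ne (show k + 1 ≠ n + 1 by omega)] using hw k hk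
    · simpa [hn] using hbc

theorem exists_seq_shortcut {w : ℕ → β} {n i d : ℕ} (hw : ∀ k < n, r (w k) (w (k + 1)))
    (hn : i + 1 + d ≤ n) (hr : r (w i) (w (i + 1 + d))) :
    ∃ w' : ℕ → β, w' 0 = w 0 ∧ w' (n - d) = w n ∧ ∀ k < n - d, r (w' k) (w' (k + 1)) := by
  refine ⟨fun k => if k ≤ i then w k else w (k + d), by simp, ?_, fun k hk => ?_⟩
  · simp only [if_neg (show ¬ n - d ≤ i by omega), Nat.sub_add_cancel (show d ≤ n by omega)]
  · rcases lt_trichotomy k i with hki | rfl | hki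
    · simpa only [if_pos hki.le, if_pos (show k + 1 ≤ i by omega)] using hw k (by omega)
    · simpa only [le_refl, if_true, if_neg (show ¬ k + 1 ≤ k by omega)] using hr
    · simpa only [if_neg (show ¬ k ≤ i by omega), if_neg (show ¬ k + 1 ≤ i by omega),
        show k + 1 + d = k + d + 1 by omega] using hw (k + d) (by omega)

theorem seq_ne_of_chordless {w : ℕ → β} {n : ℕ} (hw : ∀ k < n, r (w k) (w (k + 1)))
    (hchord : ∀ i j, i + 1 < j → j ≤ n → ¬ r (w i) (w j)) (hend : w 0 ≠ w n)
    ⦃i j : ℕ⦄ (hij : i < j) (hjn : j ≤ n) : w i ≠ w j := by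
  intro heq
  rcases hjn.lt_or_eq with hjn | rfl
  · exact hchord i (j + 1) (by omega) hjn (heq ▸ hw j hjn)
  · rcases Nat.eq_zero_or_pos i with rfl | hi
    · exact hend heq
    · have h := hw (i - 1) (by omega)
      rw [Nat.sub_add_cancel hi, heq] at h
      exact hchord (i - 1) j (by omega) le_rfl h

end Sequences

theorem Nat.even_of_alternating {p : ℕ → Prop} {n : ℕ} (h0 : p 0) (hn : p n)
    (hstep : ∀ k < n, (p (k + 1) ↔ ¬ p k)) : Even n := by
  have key : ∀ k ≤ n, (p k ↔ Even k) := by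
    intro k hk
    induction k with
    | zero => simpa using h0
    | succ k ih => rw [hstep k hk, ih (by omega), Nat.even_add_one]
  exact (key n le_rfl).1 hn

theorem Finset.exists_card_filter_lt_of_card_lt {β : Type*} [DecidableEq β] {r : β → β → Prop}
    [DecidableRel r] (hr : Equivalence r) {A B : Finset β} (h : A.card < B.card) :
    ∃ x ∈ B, (A.filter (r x)).card < (B.filter (r x)).card := by
  set cls : β → Finset β := fun x => (A ∪ B).filter (r x)
  have hfiber : ∀ s ⊆ A ∪ B, ∀ x, s.filter (fun a => cls a = cls x) = s.filter (r x) := by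
    intro s hs x
    refine filter_congr fun a ha => ⟨fun hax => ?_, fun hxa => ?_⟩
    · have : a ∈ cls a := mem_filter.2 ⟨hs ha, hr.refl a⟩
      rw [hax] at this
      exact (mem_filter.1 this).2
    · refine filter_congr fun b _ => ⟨fun hab => hr.trans hxa hab, fun hxb => ?_⟩
      exact hr.trans (hr.symm hxa) hxb
  have hmaps : ∀ s ⊆ A ∪ B, Set.MapsTo cls s ((A ∪ B).image cls) :=
    fun s hs a ha => mem_image_of_mem _ (hs ha)
  rw [card_eq_sum_card_fiberwise (hmaps A subset_union_left),
    card_eq_sum_card_fiberwise (hmaps B subset_union_right)] at h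
  obtain ⟨D, hD, hlt⟩ := exists_lt_of_sum_lt h
  obtain ⟨x, -, rfl⟩ := mem_image.1 hD
  rw [hfiber A subset_union_left, hfiber B subset_union_right] at hlt
  obtain ⟨y, hy⟩ := card_pos.1 (Nat.zero_le _ |>.trans_lt hlt)
  obtain ⟨hyB, hxy⟩ := mem_filter.1 hy
  have hsame : ∀ s : Finset β, s.filter (r y) = s.filter (r x) := fun s =>
    filter_congr fun a _ => ⟨fun h => hr.trans hxy h, fun h => hr.trans (hr.symm hxy) h⟩
  exact ⟨y, hyB, by rwa [hsame, hsame]⟩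

namespace FinsetHypergraph


section Basic

variable {α : Type*} [DecidableEq α] {H K : FinsetHypergraph α}

theorem IsMatching.mono (hKH : K.E ⊆ H.E) {M : Finset (Finset α)} (hM : K.IsMatching M) :
    H.IsMatching M :=
  ⟨hM.1.trans hKH, hM.2⟩

theorem bddAbove_card_isMatching (H : FinsetHypergraph α) :
    BddAbove ((fun M : Finset (Finset α) => M.card) '' {M | H.IsMatching M}) :=
  ⟨H.E.card, by rintro _ ⟨M, hM, rfl⟩; exact card_le_card hM.1⟩

theorem IsMatching.card_le_nuE {M : Finset (Finset α)} (hM : H.IsMatching M) :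
    M.card ≤ H.nuE :=
  le_csSup H.bddAbove_card_isMatching ⟨M, hM, rfl⟩

theorem exists_isMatching_card_eq_nuE (H : FinsetHypergraph α) :
    ∃ M, H.IsMatching M ∧ M.card = H.nuE :=
  Nat.sSup_mem (Set.Nonempty.image _ ⟨∅, (⟨empty_subset _, by simp⟩ : H.IsMatching ∅)⟩)
    H.bddAbove_card_isMatching

theorem IsMaxEMatching.card_eq_nuE {M : Finset (Finset α)} (hM : H.IsMaxEMatching M) :
    M.card = H.nuE := by
  obtain ⟨M', hM', hc⟩ := H.exists_isMatching_card_eq_nuE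
  exact le_antisymm hM.1.card_le_nuE (hc ▸ hM.2 M' hM')

theorem IsECover.tauE_le {x : α → ℕ} (hx : H.IsECover x) : H.tauE ≤ ∑ u ∈ H.V, x u :=
  Nat.sInf_le ⟨x, hx, rfl⟩

theorem exists_isECover_sum_eq_tauE (H : FinsetHypergraph α) :
    ∃ x, H.IsECover x ∧ ∑ u ∈ H.V, x u = H.tauE :=
  Nat.sInf_mem <| Set.Nonempty.image _
    ⟨fun _ => 1, fun e he => by simpa using (H.edge_nonempty e he).card_pos⟩

theorem IsMinECover.sum_eq_tauE {x : α → ℕ} (hx : H.IsMinECover x) :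
    ∑ u ∈ H.V, x u = H.tauE := by
  obtain ⟨y, hy, hyc⟩ := H.exists_isECover_sum_eq_tauE
  exact le_antisymm (hyc ▸ hx.2 y hy) hx.1.tauE_le

theorem IsMatching.card_le_sum {M : Finset (Finset α)} {x : α → ℕ} (hM : H.IsMatching M)
    (hx : H.IsECover x) : M.card ≤ ∑ u ∈ H.V, x u :=
  calc M.card = ∑ _ ∈ M, 1 := card_eq_sum_ones M
    _ ≤ ∑ m ∈ M, ∑ u ∈ m, x u := sum_le_sum fun _ hm => hx _ (hM.1 hm)
    _ = ∑ u ∈ M.biUnion id, x u := (sum_biUnion fun e he f hf hef => hM.2 e he f hf hef).symm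
    _ ≤ ∑ u ∈ H.V, x u :=
      sum_le_sum_of_subset (biUnion_subset.2 fun m hm => H.edge_subset m (hM.1 hm))

theorem IsMinECover.apply_le_one {x : α → ℕ} {v : α} (hx : H.IsMinECover x) (hv : v ∈ H.V) :
    x v ≤ 1 := by
  by_contra! h
  have hy : H.IsECover (Function.update x v 1) := by
    intro e he
    by_cases hve : v ∈ e
    · calc 1 = Function.update x v 1 v := by simp
        _ ≤ _ := single_le_sum (fun _ _ => Nat.zero_le _) hve
    · rw [sum_congr rfl fun u hu => Function.update_of_ne (ne_of_mem_of_not_mem hu hve) _ _]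
      exact hx.1 e he
  have hle := hx.2 _ hy
  rw [sum_update_of_mem hv, ← add_sum_erase _ _ hv, sdiff_singleton_eq_erase] at hle
  omega

theorem exists_of_mem_delV_E {t : α} {f : Finset α} (hf : f ∈ (H.delV t).E) :
    ∃ e ∈ H.E, e.erase t = f :=
  mem_image.1 (mem_filter.1 hf).1

theorem erase_mem_delV_E {t : α} {e : Finset α} (hs : {t} ∉ H.E) (he : e ∈ H.E) :
    e.erase t ∈ (H.delV t).E := by
  refine mem_filter.2 ⟨mem_image_of_mem _ he, ?_⟩
  rw [nonempty_iff_ne_empty, Ne, erase_eq_empty_iff, not_or]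
  exact ⟨(H.edge_nonempty e he).ne_empty, fun h => hs (h ▸ he)⟩

theorem nuE_le_nuE_delV {v : α} (hs : {v} ∉ H.E) : H.nuE ≤ (H.delV v).nuE := by
  obtain ⟨M, hM, hMc⟩ := H.exists_isMatching_card_eq_nuE
  have hmem : ∀ e ∈ M, e.erase v ∈ (H.delV v).E := fun e he => erase_mem_delV_E hs (hM.1 he)
  have hdisj : ∀ e ∈ M, ∀ f ∈ M, e ≠ f → Disjoint (e.erase v) (f.erase v) :=
    fun e he f hf hef => (hM.2 e he f hf hef).mono (erase_subset _ _) (erase_subset _ _)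
  have hinj : Set.InjOn (fun e : Finset α => e.erase v) M := by
    intro e he f hf h
    by_contra hef
    have := hdisj e he f hf hef
    rw [show e.erase v = f.erase v from h, disjoint_self_iff_empty] at this
    exact (H.delV v).edge_nonempty _ (hmem f hf) |>.ne_empty this
  have hM' : (H.delV v).IsMatching (M.image fun e => e.erase v) := by
    refine ⟨image_subset_iff.2 hmem, ?_⟩
    simp only [mem_image]
    rintro _ ⟨e, he, rfl⟩ _ ⟨f, hf, rfl⟩ hef
    exact hdisj e he f hf fun h => hef (h ▸ rfl)
  calc H.nuE = M.card := hMc.symm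
    _ = (M.image fun e => e.erase v).card := (card_image_of_injOn hinj).symm
    _ ≤ _ := hM'.card_le_nuE

theorem IsECover.nuE_delV_le {x : α → ℕ} {v : α} (hx : H.IsECover x) (hxv : x v = 0) :
    (H.delV v).nuE ≤ ∑ u ∈ H.V, x u := by
  obtain ⟨N, hN, hNc⟩ := (H.delV v).exists_isMatching_card_eq_nuE
  have hx' : (H.delV v).IsECover x := by
    intro f hf
    obtain ⟨e, he, rfl⟩ := exists_of_mem_delV_E hf
    rw [sum_erase _ hxv]
    exact hx e he
  calc (H.delV v).nuE = N.card := hNc.symm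
    _ ≤ ∑ u ∈ H.V.erase v, x u := hN.card_le_sum hx'
    _ = ∑ u ∈ H.V, x u := sum_erase _ hxv

theorem tauE_le_tauE_delV {t : α} (hs : {t} ∉ H.E) : H.tauE ≤ (H.delV t).tauE := by
  obtain ⟨y, hy, hyc⟩ := (H.delV t).exists_isECover_sum_eq_tauE
  have hsum : ∀ s : Finset α, ∑ u ∈ s, Function.update y t 0 u = ∑ u ∈ s.erase t, y u := by
    intro s
    rw [← sum_erase _ (Function.update_self t 0 y)]
    exact sum_congr rfl fun u hu => Function.update_of_ne (ne_of_mem_erase hu) _ _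
  have hx : H.IsECover (Function.update y t 0) := by
    intro e he
    rw [hsum]
    exact hy _ (erase_mem_delV_E hs he)
  calc H.tauE ≤ _ := hx.tauE_le
    _ = (H.delV t).tauE := by rw [hsum, ← hyc]; rfl

theorem card_V_add_card_E_delV_lt {t : α} (ht : t ∈ H.V) :
    (H.delV t).V.card + (H.delV t).E.card < H.V.card + H.E.card := by
  have hV : (H.delV t).V.card < H.V.card := card_erase_lt_of_mem ht
  have hE : (H.delV t).E.card ≤ H.E.card := (card_filter_le _ _).trans card_image_le
  omega

def deleteStar (H : FinsetHypergraph α) (t : α) : FinsetHypergraph α where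
  V := (H.E.filter (t ∉ ·)).biUnion id
  E := H.E.filter (t ∉ ·)
  edge_nonempty e he := H.edge_nonempty e (mem_filter.1 he).1
  edge_subset e he := subset_biUnion_of_mem id he
  vertex_mem v hv := by simpa using hv

theorem deleteStar_E_subset (t : α) : (H.deleteStar t).E ⊆ H.E := filter_subset _ _

theorem deleteStar_V_subset (t : α) : (H.deleteStar t).V ⊆ H.V :=
  biUnion_subset.2 fun e he => H.edge_subset e (mem_filter.1 he).1

theorem card_V_add_card_E_deleteStar_lt {t : α} {e : Finset α} (he : e ∈ H.E) (hte : t ∈ e) :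
    (H.deleteStar t).V.card + (H.deleteStar t).E.card < H.V.card + H.E.card := by
  have hV : (H.deleteStar t).V.card ≤ H.V.card := card_le_card (deleteStar_V_subset t)
  have hE : (H.deleteStar t).E.card < H.E.card :=
    card_lt_card (filter_ssubset.2 ⟨e, he, not_not.2 hte⟩)
  omega

theorem tauE_le_tauE_deleteStar_add_one {t : α} (ht : t ∈ H.V) :
    H.tauE ≤ (H.deleteStar t).tauE + 1 := by
  set A := H.deleteStar t
  obtain ⟨y, hy, hyc⟩ := A.exists_isECover_sum_eq_tauE
  set x : α → ℕ := fun u => (if u ∈ A.V then y u else 0) + if u = t then 1 else 0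
  have hx : H.IsECover x := by
    intro e he
    by_cases hte : t ∈ e
    · calc 1 ≤ x t := by simp [x]
        _ ≤ _ := single_le_sum (fun _ _ => Nat.zero_le _) hte
    · have heA : e ∈ A.E := mem_filter.2 ⟨he, hte⟩
      calc 1 ≤ ∑ u ∈ e, y u := hy e heA
        _ = ∑ u ∈ e, if u ∈ A.V then y u else 0 :=
          sum_congr rfl fun u hu => (if_pos (A.edge_subset e heA hu)).symm
        _ ≤ ∑ u ∈ e, x u := sum_le_sum fun u _ => Nat.le_add_right _ _
  calc H.tauE ≤ ∑ u ∈ H.V, x u := hx.tauE_le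
    _ = A.tauE + 1 := by
      rw [sum_add_distrib, sum_ite_mem, inter_eq_right.2 (deleteStar_V_subset t), hyc,
        sum_ite_eq', if_pos ht]

theorem nuE_deleteStar_lt {t : α} (ht : t ∈ H.V) (htF : t ∉ H.setF) :
    (H.deleteStar t).nuE < H.nuE := by
  obtain ⟨M, hM, hMc⟩ := (H.deleteStar t).exists_isMatching_card_eq_nuE
  rw [← hMc]
  by_contra! h
  exact htF ⟨ht, M, ⟨hM.mono (deleteStar_E_subset t), fun M' hM' => hM'.card_le_nuE.trans h⟩,
    fun m hm => (mem_filter.1 (hM.1 hm)).2⟩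

theorem Balanced.of_forall_exists_inter_eq (hH : H.Balanced)
    (hK : ∀ f ∈ K.E, ∃ e ∈ H.E, e ∩ K.V = f) : K.Balanced := by
  rintro ⟨l, v, f, ⟨⟨hl, hf, hinj, hcl⟩, hstrong⟩, hodd⟩
  have hlift : ∀ i, ∃ e, 1 ≤ i → i ≤ l → e ∈ H.E ∧ e ∩ K.V = f i := fun i =>
    if h : 1 ≤ i ∧ i ≤ l then (hK _ (hf i h.1 h.2).1).imp fun _ he _ _ => he
    else ⟨∅, fun h1 h2 => absurd ⟨h1, h2⟩ h⟩
  choose e he using hlift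
  have himg : (range l).image v ⊆ K.V := by
    intro _ hu
    obtain ⟨j, hj, rfl⟩ := mem_image.1 hu
    have := hf (j + 1) (by omega) (by simp at hj; omega)
    exact K.edge_subset _ this.1 (by simpa using this.2.1)
  refine hH ⟨l, v, e, ⟨⟨hl, fun i h1 h2 => ?_, hinj, hcl⟩, fun i h1 h2 => ?_⟩, hodd⟩
  · obtain ⟨heH, hef⟩ := he i h1 h2
    have hsub : f i ⊆ e i := hef ▸ inter_subset_left
    exact ⟨heH, hsub (hf i h1 h2).2.1, hsub (hf i h1 h2).2.2⟩
  · rw [← inter_eq_right.2 himg, ← inter_assoc, (he i h1 h2).2]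
    exact hstrong i h1 h2

theorem Balanced.deleteStar (hH : H.Balanced) (t : α) : (H.deleteStar t).Balanced :=
  hH.of_forall_exists_inter_eq fun f hf =>
    ⟨f, deleteStar_E_subset t hf, inter_eq_left.2 ((H.deleteStar t).edge_subset f hf)⟩

theorem Balanced.delV (hH : H.Balanced) (t : α) : (H.delV t).Balanced :=
  hH.of_forall_exists_inter_eq fun f hf => by
    obtain ⟨e, he, rfl⟩ := exists_of_mem_delV_E hf
    exact ⟨e, he, by rw [show (H.delV t).V = H.V.erase t from rfl, inter_erase,
      inter_eq_left.2 (H.edge_subset e he)]⟩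

end Basic

section Touch

variable {α : Type*}

def Touch (t : α) (e f : Finset α) : Prop := ∃ u ∈ e, u ∈ f ∧ u ≠ t

theorem Touch.symm {t : α} {e f : Finset α} : Touch t e f → Touch t f e :=
  fun ⟨u, he, hf, hu⟩ => ⟨u, hf, he, hu⟩

def TouchIn (U : Finset (Finset α)) (t : α) (e f : Finset α) : Prop :=
  e ∈ U ∧ f ∈ U ∧ Touch t e f

instance (U : Finset (Finset α)) (t : α) : Std.Symm (TouchIn U t) :=
  ⟨fun _ _ ⟨he, hf, h⟩ => ⟨hf, he, h.symm⟩⟩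

end Touch

section Exchange

variable {α : Type*} [DecidableEq α] {H : FinsetHypergraph α}

theorem exists_isStrongCycle_of_chordless_touch {t : α} {n : ℕ} {w : ℕ → Finset α} (hn : 1 ≤ n)
    (hE : ∀ k ≤ n, w k ∈ H.E) (hw : ∀ k < n, Touch t (w k) (w (k + 1)))
    (hchord : ∀ i j, i + 1 < j → j ≤ n → ¬ Touch t (w i) (w j))
    (ht0 : t ∈ w 0) (htn : t ∈ w n) (hint : ∀ k, 0 < k → k < n → t ∉ w k) :
    ∃ v, H.IsStrongCycle (n + 1) v fun i => w (i - 1) := by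
  have hu : ∀ k, ∃ u, (k < n → u ∈ w k ∧ u ∈ w (k + 1) ∧ u ≠ t) ∧ (n ≤ k → u = t) := fun k =>
    if hk : k < n then (hw k hk).imp fun _ h => ⟨fun _ => h, fun h' => absurd hk (by omega)⟩
    else ⟨t, fun h => absurd h hk, fun _ => rfl⟩
  choose u hu hut using hu
  -- the cycle is `t, w 0, u 0, w 1, …, u (n - 1), w n, t`, and `u n = t`
  set v : ℕ → α := fun k => if k = 0 then t else u (k - 1)
  have hmem : ∀ k ≤ n, v k ∈ w k ∧ v (k + 1) ∈ w k := by
    intro k hk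
    refine ⟨?_, ?_⟩
    · rcases k with _ | k
      · simpa [v] using ht0
      · simpa [v] using (hu k (by omega)).2.1
    · rcases hk.lt_or_eq with hk | rfl
      · simpa [v] using (hu k hk).1
      · simpa [v, hut k le_rfl] using htn
  have honly : ∀ k ≤ n, ∀ j ≤ n, v j ∈ w k → j = k ∨ j = k + 1 ∨ (j = 0 ∧ k = n) := by
    intro k hk j hj hjk
    rcases j with _ | j
    · by_contra! h
      exact hint k (by omega) (by omega) (by simpa [v] using hjk)
    · have hjk : u j ∈ w k := by simpa [v] using hjk
      obtain ⟨h1, h2, h3⟩ := hu j (by omega)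
      by_contra! h
      rcases Nat.lt_or_ge k j with hkj | hkj
      · exact hchord k (j + 1) (by omega) hj ⟨u j, hjk, h2, h3⟩
      · exact hchord j k (by omega) hk ⟨u j, h1, hjk, h3⟩
  have hinj : ∀ i j, i < j → j ≤ n → v i ≠ v j := by
    intro i j hij hjn heq
    obtain ⟨h1, h2, h3⟩ := hu (j - 1) (by omega)
    rcases i with _ | i
    · exact h3 (by simpa [v, show j ≠ 0 by omega] using heq.symm)
    · have heq : u i = u (j - 1) := by simpa [v, show j ≠ 0 by omega] using heq
      rw [Nat.sub_add_cancel (by omega : 1 ≤ j)] at h2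
      exact hchord i j (by omega) hjn ⟨u i, (hu i (by omega)).1, heq ▸ h2, heq ▸ h3⟩
  refine ⟨v, ⟨⟨by omega, fun i h1 h2 => ?_, fun i j hi hj h => ?_, ?_⟩, fun i h1 h2 => ?_⟩⟩
  · obtain ⟨k, rfl⟩ : ∃ k, i = k + 1 := ⟨i - 1, by omega⟩
    simpa using ⟨hE k (by omega), hmem k (by omega)⟩
  · rcases lt_trichotomy i j with hij | hij | hij
    · exact absurd h (hinj i j hij (by omega))
    · exact hij
    · exact absurd h.symm (hinj j i hij (by omega))
  · simp [v, hut n le_rfl]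
  · obtain ⟨k, rfl⟩ : ∃ k, i = k + 1 := ⟨i - 1, by omega⟩
    calc _ ≤ ({v k, v (k + 1)} : Finset α).card := card_le_card fun x hx => ?_
      _ ≤ 2 := card_le_two
    obtain ⟨hxk, hx⟩ := mem_inter.1 hx
    obtain ⟨j, hj, rfl⟩ := mem_image.1 hx
    simp only [add_tsub_cancel_right] at hxk
    rcases honly k (by omega) j (by simp at hj; omega) hxk with rfl | rfl | ⟨rfl, rfl⟩
    · simp
    · simp
    · simp [v, hut k le_rfl]

theorem mem_iff_notMem_of_touch {M S : Finset (Finset α)} {t : α} (hM : H.IsMatching M)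
    (hS : (S : Set (Finset α)).Pairwise fun f g => ¬ Touch t f g) {e f : Finset α}
    (he : e ∈ symmDiff M S) (hf : f ∈ symmDiff M S) (hef : e ≠ f) (h : Touch t e f) :
    f ∈ S ↔ e ∉ S := by
  rw [mem_symmDiff] at he hf
  refine ⟨fun hfS heS => hS heS hfS hef h, fun heS => by_contra fun hfS => ?_⟩
  obtain ⟨u, hue, huf, -⟩ := h
  have hd := hM.2 e (he.resolve_right (by tauto)).1 f (hf.resolve_right (by tauto)).1 hef
  exact disjoint_left.1 hd hue huf

theorem Balanced.false_of_touchIn_path {M S : Finset (Finset α)} {t : α} (hH : H.Balanced)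
    (hM : H.IsMatching M) (htM : ∀ m ∈ M, t ∉ m) (hS : S ⊆ H.E)
    (hSt : (S : Set (Finset α)).Pairwise fun f g => ¬ Touch t f g) {n : ℕ} {w : ℕ → Finset α}
    (hw : ∀ k < n, TouchIn (symmDiff M S) t (w k) (w (k + 1)))
    (ht0 : t ∈ w 0) (htn : t ∈ w n) (hne : w 0 ≠ w n) : False := by
  induction n using Nat.strong_induction_on generalizing w with
  | _ n ih =>
  have hn : 1 ≤ n := Nat.one_le_iff_ne_zero.2 fun h => hne (h ▸ rfl)
  have hU : ∀ k ≤ n, w k ∈ symmDiff M S := by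
    intro k hk
    rcases hk.lt_or_eq with hk | rfl
    · exact (hw k hk).1
    · simpa [Nat.sub_add_cancel hn] using (hw (k - 1) (by omega)).2.1
  by_cases hchord : ∃ i j, i + 1 < j ∧ j ≤ n ∧ Touch t (w i) (w j)
  · obtain ⟨i, j, hij, hjn, htouch⟩ := hchord
    obtain ⟨w', h0, hn', hw'⟩ := exists_seq_shortcut (i := i) (d := j - i - 1) hw (by omega)
      (by rw [show i + 1 + (j - i - 1) = j by omega]; exact ⟨hU i (by omega), hU j hjn, htouch⟩)
    exact ih (n - (j - i - 1)) (by omega) hw' (h0 ▸ ht0) (hn' ▸ htn) (h0 ▸ hn' ▸ hne)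
  push Not at hchord
  have hdist := seq_ne_of_chordless hw (fun i j hij hjn h => hchord i j hij hjn h.2.2) hne
  by_cases hint : ∃ k, 0 < k ∧ k < n ∧ t ∈ w k
  · obtain ⟨k, hk0, hkn, htk⟩ := hint
    exact ih k hkn (fun i hi => hw i (by omega)) ht0 htk (hdist hk0 hkn.le)
  push Not at hint
  have hmemS : ∀ k ≤ n, t ∈ w k → w k ∈ S := fun k hk htk =>
    ((mem_symmDiff.1 (hU k hk)).resolve_left fun h => htM _ h.1 htk).1
  -- edges of `M` avoid `t` and the path alternates between `S` and `M`, so its length is even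
  have heven : Even n := Nat.even_of_alternating (p := fun k => w k ∈ S)
    (hmemS 0 (Nat.zero_le _) ht0) (hmemS n le_rfl htn) fun k hk =>
      mem_iff_notMem_of_touch hM hSt (hU k hk.le) (hU (k + 1) hk) (hdist k.lt_succ_self hk)
        (hw k hk).2.2
  obtain ⟨v, hv⟩ := H.exists_isStrongCycle_of_chordless_touch hn
    (fun k hk => (mem_union.1 (symmDiff_subset_union (hU k hk))).elim (fun h => hM.1 h)
      fun h => hS h)
    (fun k hk => (hw k hk).2.2) hchord ht0 htn hint
  exact hH ⟨n + 1, v, _, hv, heven.add_one⟩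

theorem Balanced.exists_isMatching_card_gt {M S : Finset (Finset α)} {t : α} (hH : H.Balanced)
    (hM : H.IsMatching M) (htM : ∀ m ∈ M, t ∉ m) (hS : S ⊆ H.E)
    (hSt : (S : Set (Finset α)).Pairwise fun f g => ¬ Touch t f g) (hlt : M.card < S.card) :
    ∃ N, H.IsMatching N ∧ M.card < N.card := by
  classical
  set R := Relation.ReflTransGen (TouchIn (symmDiff M S) t)
  have hR : Equivalence R := ⟨fun _ => .refl, fun h => Std.Symm.symm _ _ h, .trans⟩
  have hsdiff : (M \ S).card < (S \ M).card := by
    have hM' := card_sdiff_add_card_inter M S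
    have hS' := card_sdiff_add_card_inter S M
    rw [inter_comm] at hS'
    omega
  -- a component of the symmetric difference with more edges of `S` than of `M`
  obtain ⟨x, hx, hcomp⟩ := exists_card_filter_lt_of_card_lt hR hsdiff
  have hxU : ∀ e, R x e → e ∈ symmDiff M S := fun e h => by
    induction h with
    | refl => exact mem_symmDiff.2 (Or.inr (mem_sdiff.1 hx))
    | tail _ h _ => exact h.2.1
  have hpetal : ∀ e ∈ S, ∀ f ∈ S, R x e → R x f → t ∈ e → t ∈ f → e = f := by
    intro e _ f _ hxe hxf hte htf
    by_contra hef
    obtain ⟨n, w, h0, hn, hw⟩ := (hR.trans (hR.symm hxe) hxf).exists_seq_s16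
    exact hH.false_of_touchIn_path hM htM hS hSt hw (h0 ▸ hte) (hn ▸ htf) (h0 ▸ hn ▸ hef)
  have hcross : ∀ e ∈ M, ¬ R x e → ∀ f ∈ S \ M, R x f → Disjoint e f := by
    intro e heM hxe f hf hxf
    refine disjoint_left.2 fun u hue huf => ?_
    have htouch : Touch t e f := ⟨u, hue, huf, fun h => htM e heM (h ▸ hue)⟩
    have hef : e ≠ f := fun h => (mem_sdiff.1 hf).2 (h ▸ heM)
    by_cases heS : e ∈ S
    · exact hSt heS (mem_sdiff.1 hf).1 hef htouch
    · exact hxe (hxf.tail ⟨hxU f hxf, mem_symmDiff.2 (Or.inl ⟨heM, heS⟩), htouch.symm⟩)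
  have hMR : M.filter (R x) = (M \ S).filter (R x) := by
    ext e
    simp only [mem_filter, mem_sdiff, and_congr_left_iff]
    exact fun hxe => ⟨fun heM => ⟨heM, ((mem_symmDiff.1 (hxU e hxe)).resolve_right
      fun h => h.2 heM).2⟩, And.left⟩
  refine ⟨M.filter (¬ R x ·) ∪ (S \ M).filter (R x), ⟨?_, ?_⟩, ?_⟩
  · exact union_subset ((filter_subset _ _).trans hM.1)
      ((filter_subset _ _).trans (sdiff_subset.trans hS))
  · intro e he f hf hef
    simp only [mem_union, mem_filter] at he hf
    rcases he with ⟨heM, hxe⟩ | ⟨heS, hxe⟩ <;> rcases hf with ⟨hfM, hxf⟩ | ⟨hfS, hxf⟩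
    · exact hM.2 e heM f hfM hef
    · exact hcross e heM hxe f hfS hxf
    · exact (hcross f hfM hxf e heS hxe).symm
    · -- two edges of `S` in one component meet at most in `t`, which lies in at most one of them
      refine disjoint_left.2 fun u hue huf => ?_
      have hut : u = t := by
        by_contra hut
        exact hSt (mem_sdiff.1 heS).1 (mem_sdiff.1 hfS).1 hef ⟨u, hue, huf, hut⟩
      subst hut
      exact hef (hpetal e (mem_sdiff.1 heS).1 f (mem_sdiff.1 hfS).1 hxe hxf hue huf)
  · have hdisj : Disjoint (M.filter (¬ R x ·)) ((S \ M).filter (R x)) :=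
      disjoint_filter_filter' _ _ fun _ h₁ h₂ _ h => h₁ _ h (h₂ _ h)
    rw [card_union_of_disjoint hdisj, ← card_filter_add_card_filter_not (R x) (s := M), hMR]
    omega

theorem exists_lift_of_isMatching_delV {t : α} {N : Finset (Finset α)}
    (hN : (H.delV t).IsMatching N) :
    ∃ S ⊆ H.E, S.card = N.card ∧ (S : Set (Finset α)).Pairwise fun f g => ¬ Touch t f g := by
  have hlift : ∀ f ∈ N, ∃ e ∈ H.E, e.erase t = f := fun f hf => exists_of_mem_delV_E (hN.1 hf)
  choose! g hgE hg using hlift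
  have hinj : Set.InjOn g N := fun f hf f' hf' h => by rw [← hg f hf, ← hg f' hf', h]
  refine ⟨N.image g, image_subset_iff.2 hgE, card_image_of_injOn hinj, ?_⟩
  rw [coe_image]
  rintro _ ⟨f, hf, rfl⟩ _ ⟨f', hf', rfl⟩ hne ⟨u, hu, hu', hut⟩
  have hff' : f ≠ f' := fun h => hne (h ▸ rfl)
  exact disjoint_left.1 (hN.2 f hf f' hf' hff') (hg f hf ▸ mem_erase.2 ⟨hut, hu⟩)
    (hg f' hf' ▸ mem_erase.2 ⟨hut, hu'⟩)

theorem Balanced.nuE_delV_le {t : α} (hH : H.Balanced) (ht : t ∈ H.setF) :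
    (H.delV t).nuE ≤ H.nuE := by
  obtain ⟨-, M, hM, htM⟩ := ht
  obtain ⟨N, hN, hNc⟩ := (H.delV t).exists_isMatching_card_eq_nuE
  obtain ⟨S, hSE, hSc, hSt⟩ := exists_lift_of_isMatching_delV hN
  by_contra! hlt
  obtain ⟨M', hM', hMM'⟩ :=
    hH.exists_isMatching_card_gt hM.1 htM hSE hSt (by rw [hM.card_eq_nuE]; omega)
  exact (hM.2 M' hM').not_gt hMM'

theorem singleton_notMem_E_of_mem_setF {t : α} (ht : t ∈ H.setF) : {t} ∉ H.E := by
  obtain ⟨-, M, hM, htM⟩ := ht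
  intro hs
  have hins : H.IsMatching (insert {t} M) := by
    refine ⟨insert_subset hs hM.1.1, ?_⟩
    simp only [mem_insert]
    rintro e (rfl | he) f (rfl | hf) hef
    · exact absurd rfl hef
    · exact disjoint_singleton_left.2 (htM f hf)
    · exact disjoint_singleton_right.2 (htM e he)
    · exact hM.1.2 e he f hf hef
  have hcard := hM.2 _ hins
  rw [card_insert_of_notMem fun h => htM _ h (mem_singleton_self t)] at hcard
  omega

theorem Balanced.tauE_le_nuE (hH : H.Balanced) : H.tauE ≤ H.nuE := by
  induction hs : H.V.card + H.E.card using Nat.strong_induction_on generalizing H with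
  | _ s ih =>
  obtain hE | ⟨e, he⟩ := H.E.eq_empty_or_nonempty
  · have h0 : H.IsECover 0 := fun e he => by simp [hE] at he
    exact h0.tauE_le.trans (by simp)
  obtain ⟨t, hte⟩ := H.edge_nonempty e he
  have htV : t ∈ H.V := H.edge_subset e he hte
  by_cases htF : t ∈ H.setF
  · calc H.tauE ≤ (H.delV t).tauE := tauE_le_tauE_delV (singleton_notMem_E_of_mem_setF htF)
      _ ≤ (H.delV t).nuE := ih _ (hs ▸ card_V_add_card_E_delV_lt htV) (hH.delV t) rfl
      _ ≤ H.nuE := hH.nuE_delV_le htF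
  · calc H.tauE ≤ (H.deleteStar t).tauE + 1 := tauE_le_tauE_deleteStar_add_one htV
      _ ≤ (H.deleteStar t).nuE + 1 := by
        gcongr
        exact ih _ (hs ▸ card_V_add_card_E_deleteStar_lt he hte) (hH.deleteStar t) rfl
      _ ≤ H.nuE := nuE_deleteStar_lt htV htF

end Exchange

end FinsetHypergraph

/-- `⋎_E(H) = ⋎_E(H ∖ v)` for every `v ∈ F_H` and every `v ∈ N_H`. -/
theorem nuE_delV_of_mem_setF_setN {α : Type*} [DecidableEq α] (H : FinsetHypergraph α)
    (hH : H.Balanced) :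
    (∀ v ∈ H.setF, H.nuE = (H.delV v).nuE) ∧ (∀ v ∈ H.setN, H.nuE = (H.delV v).nuE) := by
  refine ⟨fun v hv => le_antisymm (H.nuE_le_nuE_delV (H.singleton_notMem_E_of_mem_setF hv))
    (hH.nuE_delV_le hv), ?_⟩
  rintro v ⟨hvV, hvQ, -⟩
  obtain ⟨x, hx, hxv⟩ : ∃ x, H.IsMinECover x ∧ x v = 0 := by
    by_contra! h
    exact hvQ ⟨hvV, fun x hx =>
      le_antisymm (hx.apply_le_one hvV) (Nat.one_le_iff_ne_zero.2 (h x hx))⟩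
  have hs : {v} ∉ H.E := fun hv => by simpa [hxv] using hx.1 {v} hv
  refine le_antisymm (H.nuE_le_nuE_delV hs) ?_
  calc (H.delV v).nuE ≤ ∑ u ∈ H.V, x u := hx.1.nuE_delV_le hxv
    _ = H.tauE := hx.sum_eq_tauE
    _ ≤ H.nuE := hH.tauE_le_nuE
end
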